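/- arXiv:1505.00090 — 8 statements merged into one kernel-verified Lean document; each statement's English description precedes it below -/
import Mathlib

section
/- Let k, n ≥ 1 be natural numbers with 4k dividing n, and let s : Fin (k·n) → Fin n be a sequence of k·n elements of Fin n. Partition the index set Fin (k·n) into r = 4k² consecutive segments, each of length n/(4k). Then there exists a set J of exactly 2k of these segments such that: (1) the number of elements v ∈ Fin n every occurrence of which in s lies inside segments belonging to J is at least n / (2 · C(4k², 2k)), and (2) the number of elements v ∈ Fin n having no occurrence in any segment belonging to J is at least n/2. Here C(·,·) denotes the binomial coefficient. -/
/-!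
Every index lies in exactly one segment, so a value meeting more than `2k` segments occurs more
than `2k` times; as there are only `k·n` occurrences, at least half of the values meet at most `2k`
segments. The segments of each such value fit into some `2k`-set of segments, and pigeonholing over
the `C(4k², 2k)` such sets yields one set `J` that works for a `1/C(4k², 2k)` fraction of them.
Finally, any `2k` segments hold only `2k · n/(4k) = n/2` indices, so at most `n/2` values occur
there.
-/

/-- Index `i ∈ Fin (k·n)` lies in the `seg`-th consecutive segment of length `n/(4k)`. -/
def inSegment (k n : ℕ) (seg : Fin (4 * k ^ 2)) (i : Fin (k * n)) : Prop :=
  (seg : ℕ) * (n / (4 * k)) ≤ (i : ℕ) ∧ (i : ℕ) < ((seg : ℕ) + 1) * (n / (4 * k))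

open Finset

section Occurrences

variable {ι α β : Type*} [Fintype ι] [DecidableEq α] [DecidableEq β]

def blocksOf (blk : ι → β) (s : ι → α) (v : α) : Finset β :=
  ({i | s i = v} : Finset ι).image blk

theorem blocksOf_subset_iff {blk : ι → β} {s : ι → α} {v : α} {J : Finset β} :
    blocksOf blk s v ⊆ J ↔ ∀ i, s i = v → blk i ∈ J := by
  simp [blocksOf, image_subset_iff]

theorem card_filter_lt_card_blocksOf_mul_le [Fintype α] (blk : ι → β) (s : ι → α) (m : ℕ) :
    #{v | m < #(blocksOf blk s v)} * (m + 1) ≤ Fintype.card ι :=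
  calc #{v | m < #(blocksOf blk s v)} * (m + 1)
      ≤ ∑ v ∈ {v | m < #(blocksOf blk s v)}, #{i | s i = v} := by
        rw [← smul_eq_mul]
        refine card_nsmul_le_sum _ _ _ fun v hv => ?_
        exact (mem_filter.1 hv).2.trans_le card_image_le
    _ ≤ ∑ v, #{i | s i = v} := sum_le_sum_of_subset (subset_univ _)
    _ = Fintype.card ι := (card_eq_sum_card_fiberwise fun i _ => mem_univ (s i)).symm

theorem le_two_mul_card_filter_card_blocksOf_le [Fintype α] (blk : ι → β) (s : ι → α) (k : ℕ)
    (hι : Fintype.card ι = k * Fintype.card α) :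
    Fintype.card α ≤ 2 * #{v | #(blocksOf blk s v) ≤ 2 * k} := by
  have hbad := card_filter_lt_card_blocksOf_mul_le blk s (2 * k)
  have hsplit := card_filter_add_card_filter_not (s := univ) (fun v => #(blocksOf blk s v) ≤ 2 * k)
  simp only [not_le, card_univ] at hsplit
  have : 2 * #{v | 2 * k < #(blocksOf blk s v)} ≤ Fintype.card α :=
    Nat.le_of_mul_le_mul_right (c := 2 * k + 1) (by nlinarith) (by omega)
  omega

theorem card_le_card_filter_mem_add_card_filter_forall_not_mem [Fintype α] (blk : ι → β)
    (s : ι → α) (J : Finset β) :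
    Fintype.card α ≤ #{i | blk i ∈ J} + #{v | ∀ i, s i = v → blk i ∉ J} := by
  have : ({v | ∀ i, s i = v → blk i ∉ J} : Finset α) =
      univ \ ({i | blk i ∈ J} : Finset ι).image s := by
    ext v
    simp only [mem_filter, mem_univ, true_and, mem_sdiff, mem_image]
    grind
  rw [this, card_sdiff_of_subset (subset_univ _), card_univ]
  have := card_image_le (s := ({i | blk i ∈ J} : Finset ι)) (f := s)
  omega

end Occurrences

theorem exists_card_eq_card_div_choose_le {α β : Type*} [Fintype β] [DecidableEq β] {m : ℕ} (G : Finset α) (S : α → Finset β) (hm : m ≤ Fintype.card β)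
    (hG : ∀ v ∈ G, #(S v) ≤ m) :
    ∃ J : Finset β, #J = m ∧ (#G : ℝ) / (Fintype.card β).choose m ≤ #{v ∈ G | S v ⊆ J} := by
  choose! T hST hT using fun v hv => exists_superset_card_eq (hG v hv) hm
  have hmaps : ∀ v ∈ G, T v ∈ powersetCard m univ := fun v hv =>
    mem_powersetCard.2 ⟨subset_univ _, hT v hv⟩
  have hchoose : ((Fintype.card β).choose m : ℝ) ≠ 0 := by
    exact_mod_cast (Nat.choose_pos hm).ne'
  obtain ⟨J, hJ, hle⟩ := exists_le_card_fiber_of_nsmul_le_card_of_maps_to hmaps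
    (powersetCard_nonempty.2 (by simpa using hm)) (b := (#G : ℝ) / (Fintype.card β).choose m)
    (by rw [card_powersetCard, card_univ, nsmul_eq_mul, mul_div_cancel₀ _ hchoose])
  refine ⟨J, (mem_powersetCard.1 hJ).2, hle.trans ?_⟩
  exact_mod_cast card_le_card fun v hv => by
    obtain ⟨hvG, rfl⟩ := mem_filter.1 hv
    exact mem_filter.2 ⟨hvG, hST v hvG⟩

section Segments

variable {k n : ℕ} (hdvd : 4 * k ∣ n)

def segmentOf (i : Fin (k * n)) : Fin (4 * k ^ 2) :=
  ⟨i / (n / (4 * k)), Nat.div_lt_of_lt_mul <| by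
    have := Nat.mul_div_cancel' hdvd
    have := i.isLt
    nlinarith⟩

theorem inSegment_iff_segmentOf_eq {seg : Fin (4 * k ^ 2)} {i : Fin (k * n)} :
    inSegment k n seg i ↔ segmentOf hdvd i = seg := by
  constructor
  · rintro ⟨hlo, hhi⟩
    exact Fin.ext (Nat.div_eq_of_lt_le hlo hhi)
  · rintro rfl
    have hL : 0 < n / (4 * k) := Nat.pos_of_ne_zero fun hL => by
      have hi := i.isLt
      have hn := Nat.mul_div_cancel' hdvd
      rw [hL, mul_zero] at hn
      simp [← hn] at hi
    exact ⟨Nat.div_mul_le_self _ _, by rw [add_one_mul]; exact Nat.lt_div_mul_add hL⟩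

theorem card_filter_segmentOf_eq_le (seg : Fin (4 * k ^ 2)) :
    #{i | segmentOf hdvd i = seg} ≤ n / (4 * k) :=
  calc #{i | segmentOf hdvd i = seg}
      ≤ #(Ico ((seg : ℕ) * (n / (4 * k))) (((seg : ℕ) + 1) * (n / (4 * k)))) := by
        refine card_le_card_of_injOn Fin.val (fun i hi => ?_) Fin.val_injective.injOn
        simpa [inSegment] using (inSegment_iff_segmentOf_eq hdvd).2 (mem_filter.1 hi).2
    _ = n / (4 * k) := by rw [Nat.card_Ico, add_one_mul, Nat.add_sub_cancel_left]

theorem card_filter_segmentOf_mem_le (J : Finset (Fin (4 * k ^ 2))) :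
    #{i | segmentOf hdvd i ∈ J} ≤ n / (4 * k) * #J :=
  card_le_mul_card_image_of_maps_to (fun _ hi => (mem_filter.1 hi).2) _ fun seg _ =>
    (card_le_card (filter_subset_filter _ (subset_univ _))).trans
      (card_filter_segmentOf_eq_le hdvd seg)

theorem le_two_mul_card_filter_forall_segmentOf_not_mem (s : Fin (k * n) → Fin n)
    {J : Finset (Fin (4 * k ^ 2))} (hJ : #J = 2 * k) :
    n ≤ 2 * #{v | ∀ i, s i = v → segmentOf hdvd i ∉ J} := by
  have hcover := card_filter_segmentOf_mem_le hdvd J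
  have havoid : n ≤ #{i | segmentOf hdvd i ∈ J} + #{v | ∀ i, s i = v → segmentOf hdvd i ∉ J} := by
    -- `convert` identifies the `Fin`-specific decidability instance of `∀ i` with the generic one
    convert card_le_card_filter_mem_add_card_filter_forall_not_mem (segmentOf hdvd) s J
    exact (Fintype.card_fin n).symm
  have hhalf : 2 * (n / (4 * k) * #J) = n :=
    calc 2 * (n / (4 * k) * #J) = 4 * k * (n / (4 * k)) := by rw [hJ]; ring
      _ = n := Nat.mul_div_cancel' hdvd
  omega

end Segments

theorem segment_assignment_general (k n : ℕ) (hdvd : 4 * k ∣ n)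
    (s : Fin (k * n) → Fin n) :
    ∃ J : Finset (Fin (4 * k ^ 2)), J.card = 2 * k ∧
      (Nat.card {v : Fin n // ∀ i : Fin (k * n), s i = v → ∃ seg ∈ J, inSegment k n seg i} : ℝ) ≥
        (n : ℝ) / (2 * (Nat.choose (4 * k ^ 2) (2 * k) : ℝ)) ∧
      (Nat.card {v : Fin n // ∀ i : Fin (k * n), s i = v → ∀ seg ∈ J, ¬ inSegment k n seg i} : ℝ) ≥
        (n : ℝ) / 2 := by
  have hgood := le_two_mul_card_filter_card_blocksOf_le (segmentOf hdvd) s k (by simp)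
  set good : Finset (Fin n) := {v | #(blocksOf (segmentOf hdvd) s v) ≤ 2 * k}
  rw [Fintype.card_fin] at hgood
  obtain ⟨J, hJ, hJgood⟩ := exists_card_eq_card_div_choose_le good (blocksOf (segmentOf hdvd) s)
    (m := 2 * k) (by rw [Fintype.card_fin]; nlinarith) fun v hv => (mem_filter.1 hv).2
  simp only [inSegment_iff_segmentOf_eq hdvd, exists_eq_right', forall_mem_not_eq, ge_iff_le]
  refine ⟨J, hJ, ?_, ?_⟩ <;> rw [Nat.card_eq_fintype_card, Fintype.card_subtype]
  · calc (n : ℝ) / (2 * (4 * k ^ 2).choose (2 * k))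
        ≤ #good / (4 * k ^ 2).choose (2 * k) := by
          rw [← div_div]
          gcongr
          rw [div_le_iff₀ two_pos]
          exact_mod_cast hgood.trans_eq (mul_comm _ _)
      _ ≤ #{v ∈ good | blocksOf (segmentOf hdvd) s v ⊆ J} := by simpa using hJgood
      _ ≤ #{v | blocksOf (segmentOf hdvd) s v ⊆ J} := by gcongr; exact subset_univ _
      _ = _ := by simp only [blocksOf_subset_iff]
  · rw [div_le_iff₀ two_pos, mul_comm]
    exact_mod_cast le_two_mul_card_filter_forall_segmentOf_not_mem hdvd s hJ

/-- Dividing a sequence `s` of `k·n` elements of `Fin n` into `4k²` consecutive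
segments of length `n/(4k)`, there is a choice of `2k` segments `J` such that
at least `n/(2·C(4k²,2k))` elements of `Fin n` occur only inside segments of `J`,
and at least `n/2` elements occur in no segment of `J`. -/
theorem segment_assignment (k n : ℕ) (hk : 1 ≤ k) (hn : 1 ≤ n) (hdvd : 4 * k ∣ n)
    (s : Fin (k * n) → Fin n) :
    ∃ J : Finset (Fin (4 * k ^ 2)), J.card = 2 * k ∧
      (Nat.card {v : Fin n // ∀ i : Fin (k * n), s i = v → ∃ seg ∈ J, inSegment k n seg i} : ℝ) ≥
        (n : ℝ) / (2 * (Nat.choose (4 * k ^ 2) (2 * k) : ℝ)) ∧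
      (Nat.card {v : Fin n // ∀ i : Fin (k * n), s i = v → ∀ seg ∈ J, ¬ inSegment k n seg i} : ℝ) ≥
        (n : ℝ) / 2 :=
  segment_assignment_general k n hdvd s
end

section
/- Let n be even, k ≥ 1, and suppose an oblivious program with time T ≤ k·n and space S on inputs x : Fin n → Fin (2n) computes MedianBit. Then for every even natural number N with 2 ≤ N ≤ n / C(4k², 2k) (C denoting the binomial coefficient), there exists a deterministic two-party protocol with at most 4k+1 messages, each of length at most S bits, in which Alice's input is a set x ⊆ {1,…,2N} of size N/2 and Bob's input is a set y ⊆ {1,…,2N} of size N/2, that for every pair of disjoint such sets (x, y) outputs the least significant bit of the (N/2)-th smallest element of x ∪ y. -/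
/-!
At least half of the input positions are read fewer than `2k` times, since `T ≤ kn`; split them
into two candidate sets. Scanning the time line from the right, as soon as more than half of one
set has been visited, keep the visited half of it, whose visit counts on the remaining prefix have
dropped, and the unvisited half of the other set, which the scanned suffix avoids. After at most
`4k - 2` such halvings the time line is cut into `4k` segments alternately avoiding two disjoint
`N/2`-sets `PA` and `PB`; the bound `2 ^ (4k - 2) ≤ C(4k², 2k)` pays for the halvings.
Alice's set `x` is written on `PA` and Bob's set `y` on `PB`, both shifted up by an even amount,
and the other positions get equally many smaller and larger values, so that the median of the
input is the `N/2`-th smallest element of `x ∪ y`, shifted. Alice runs the segments that avoid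
`PB`, Bob those that avoid `PA`, and each message is the `S`-bit state of the program at the end
of a segment.
-/

/-- The least significant bit of the median (the `n/2`-th smallest) of the `n`
values `x i + 1`, each in `{1, …, 2n}`. -/
def medianBit (n : ℕ) (x : Fin n → Fin (2 * n)) : Bool :=
  decide ((((Finset.univ.image fun i => (x i : ℕ) + 1).sort (· ≤ ·)).getD (n / 2 - 1) 0) % 2 = 1)

/-- An oblivious program with time `T` and space `S` on inputs `x : Fin n → Fin (2n)`. -/
structure ObliviousProgram (n T S : ℕ) where
  Q : Type
  [fintypeQ : Fintype Q]
  card_le : Fintype.card Q ≤ 2 ^ S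
  start : Q
  query : Fin T → Fin n
  step : Fin T → Q → Fin (2 * n) → Q
  out : Q → Bool

/-- The output of an oblivious program on input `x`. -/
def ObliviousProgram.run {n T S : ℕ} (P : ObliviousProgram n T S)
    (x : Fin n → Fin (2 * n)) : Bool :=
  P.out ((List.finRange T).foldl (fun q i => P.step i q (x (P.query i))) P.start)

/-- The program computes `MedianBit` on all injective inputs. -/
def ObliviousProgram.ComputesMedianBit {n T S : ℕ} (P : ObliviousProgram n T S) : Prop :=
  ∀ x : Fin n → Fin (2 * n), Function.Injective x → P.run x = medianBit n x

/-- Sender of the `i`-th message (0-indexed) is Alice iff this is `true`. -/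
def sendsAlice (aliceFirst : Bool) (i : ℕ) : Bool := aliceFirst = (i % 2 == 0)

/-- A deterministic two-party protocol with `t` messages of lengths `m 0, …, m (t-1)`:
the `i`-th message is computed from the sender's input and the previous messages, players
strictly alternating; the output is computed by the receiver of the last message from its
input and the full transcript. -/
structure Protocol (X Y : Type) (t : ℕ) (m : Fin t → ℕ) (aliceFirst : Bool) where
  msgA : (i : Fin t) → X → ((j : Fin t) → j < i → Fin (2 ^ m j)) → Fin (2 ^ m i)
  msgB : (i : Fin t) → Y → ((j : Fin t) → j < i → Fin (2 ^ m j)) → Fin (2 ^ m i)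
  outA : X → ((i : Fin t) → Fin (2 ^ m i)) → Bool
  outB : Y → ((i : Fin t) → Fin (2 ^ m i)) → Bool

/-- The transcript of a protocol on inputs `x`, `y`. -/
def Protocol.transcript {X Y : Type} {t : ℕ} {m : Fin t → ℕ} {af : Bool}
    (P : Protocol X Y t m af) (x : X) (y : Y) (i : Fin t) : Fin (2 ^ m i) :=
  if sendsAlice af i.val then P.msgA i x (fun j hj => P.transcript x y j)
  else P.msgB i y (fun j hj => P.transcript x y j)
termination_by i.val
decreasing_by
  · exact hj
  · exact hj

/-- The output of the protocol, computed by the receiver of the last message. -/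
def Protocol.run {X Y : Type} {t : ℕ} {m : Fin t → ℕ} {af : Bool}
    (P : Protocol X Y t m af) (x : X) (y : Y) : Bool :=
  if sendsAlice af (t - 1) then P.outB y (P.transcript x y) else P.outA x (P.transcript x y)

/-- The least significant bit of the `N/2`-th smallest of the values `a + 1`, `a ∈ s`. -/
def lsbHalfKth (N : ℕ) (s : Finset (Fin (2 * N))) : Bool :=
  decide ((((s.sort (· ≤ ·)).map (fun a => (a : ℕ) + 1)).getD (N / 2 - 1) 0) % 2 = 1)

open Finset

namespace AltSplitting

variable {α : Type*} (q : ℕ → α)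

def Avoids (s : Finset α) (a b : ℕ) : Prop := ∀ i ∈ Ico a b, q i ∉ s

/-- The even-numbered intervals will be run by Alice, who does not know the symbols in `B`. -/
def AltSplit (A B : Finset α) (b r : ℕ) : Prop :=
  ∃ c : ℕ → ℕ, c 0 = 0 ∧ c r = b ∧
    ∀ ℓ < r, c ℓ ≤ c (ℓ + 1) ∧ Avoids q (if Even ℓ then B else A) (c ℓ) (c (ℓ + 1))

def visits [DecidableEq α] (p : α) (a b : ℕ) : ℕ := #{i ∈ Ico a b | q i = p}

def unvisited [DecidableEq α] (X : Finset α) (t b : ℕ) : Finset α :=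
  {p ∈ X | ∀ i ∈ Ico t b, q i ≠ p}

variable {q}

theorem Avoids.mono {s s' : Finset α} {a b : ℕ} (h : Avoids q s a b) (hs : s' ⊆ s) :
    Avoids q s' a b :=
  fun i hi hq => h i hi (hs hq)

theorem Avoids.trans {s : Finset α} {a t b : ℕ} (h₁ : Avoids q s a t) (h₂ : Avoids q s t b) :
    Avoids q s a b := by
  intro i hi
  by_cases hit : i < t
  · exact h₁ i (mem_Ico.2 ⟨(mem_Ico.1 hi).1, hit⟩)
  · exact h₂ i (mem_Ico.2 ⟨not_lt.1 hit, (mem_Ico.1 hi).2⟩)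

theorem avoids_self (s : Finset α) (a : ℕ) : Avoids q s a a := by
  simp [Avoids]

namespace AltSplit

variable {A B A' B' : Finset α} {b t r : ℕ}

theorem mono (h : AltSplit q A B b r) (hA : A' ⊆ A) (hB : B' ⊆ B) : AltSplit q A' B' b r := by
  obtain ⟨c, h0, hr, hc⟩ := h
  refine ⟨c, h0, hr, fun ℓ hℓ => ⟨(hc ℓ hℓ).1, (hc ℓ hℓ).2.mono ?_⟩⟩
  split_ifs
  exacts [hB, hA]

theorem snoc (h : AltSplit q A B t r) (htb : t ≤ b)
    (hav : Avoids q (if Even r then B else A) t b) : AltSplit q A B b (r + 1) := by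
  obtain ⟨c, h0, hr, hc⟩ := h
  refine ⟨fun ℓ => if ℓ ≤ r then c ℓ else b, by simpa using h0, by simp, fun ℓ hℓ => ?_⟩
  rcases (Nat.lt_succ_iff.1 hℓ).lt_or_eq with hlt | rfl
  · simpa [hlt.le, Nat.succ_le_of_lt hlt] using hc ℓ hlt
  · simpa [hr] using And.intro htb hav

theorem unsnoc (h : AltSplit q A B t (r + 1)) :
    ∃ s ≤ t, AltSplit q A B s r ∧ Avoids q (if Even r then B else A) s t := by
  obtain ⟨c, h0, hr, hc⟩ := h
  exact ⟨c r, hr ▸ (hc r r.lt_succ_self).1, ⟨c, h0, rfl, fun ℓ hℓ => hc ℓ (by omega)⟩,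
    hr ▸ (hc r r.lt_succ_self).2⟩

/-- The new interval is appended or merged into the last one, according to parity. -/
theorem append (h : AltSplit q A B t (r + 1)) (htb : t ≤ b)
    (hav : Avoids q A t b ∨ Avoids q B t b) : AltSplit q A B b (r + 2) := by
  by_cases hnext : Avoids q (if Even (r + 1) then B else A) t b
  · exact h.snoc htb hnext
  obtain ⟨s, hst, hs, hlast⟩ := h.unsnoc
  have hav' : Avoids q (if Even r then B else A) t b := by
    by_cases hr : Even r
    · rw [if_neg (by simpa [Nat.even_add_one] using hr)] at hnext
      rw [if_pos hr]
      exact hav.resolve_left hnext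
    · rw [if_pos (Nat.even_add_one.2 hr)] at hnext
      rw [if_neg hr]
      exact hav.resolve_right hnext
  exact (hs.snoc (hst.trans htb) (hlast.trans hav')).snoc le_rfl (avoids_self _ _)

theorem pad (h : AltSplit q A B b r) {r' : ℕ} (hr : r ≤ r') : AltSplit q A B b r' := by
  obtain ⟨c, h0, hcr, hc⟩ := h
  refine ⟨fun ℓ => c (min ℓ r), by simpa using h0, by simpa [hr] using hcr, fun ℓ _ => ?_⟩
  by_cases hℓ : ℓ < r
  · simpa [hℓ.le, Nat.succ_le_of_lt hℓ] using hc ℓ hℓ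
  · simpa [show min ℓ r = r by omega, show min (ℓ + 1) r = r by omega] using avoids_self _ _

theorem of_avoids (h : Avoids q A 0 b ∨ Avoids q B 0 b) (hr : 2 ≤ r) : AltSplit q A B b r :=
  have h₀ : AltSplit q A B 0 1 := ⟨fun _ => 0, rfl, rfl, fun _ _ => ⟨le_rfl, avoids_self _ _⟩⟩
  (h₀.append b.zero_le h).pad hr

end AltSplit

variable [DecidableEq α]

theorem visits_mono {p : α} {a t b : ℕ} (h : t ≤ b) : visits q p a t ≤ visits q p a b :=
  card_le_card (filter_subset_filter _ (Ico_subset_Ico_right h))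

theorem avoids_of_visits_le_zero {X : Finset α} {b : ℕ} (h : ∀ p ∈ X, visits q p 0 b ≤ 0) :
    Avoids q X 0 b := fun i hi hqi =>
  (show 0 < visits q (q i) 0 b from card_pos.2 ⟨i, mem_filter.2 ⟨hi, rfl⟩⟩).ne'
    (Nat.le_zero.1 (h _ hqi))

theorem unvisited_subset {X : Finset α} {t b : ℕ} : unvisited q X t b ⊆ X := filter_subset _ X

theorem avoids_unvisited (X : Finset α) (t b : ℕ) : Avoids q (unvisited q X t b) t b :=
  fun i hi hq => (mem_filter.1 hq).2 i hi rfl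

theorem unvisited_of_le {X : Finset α} {t b : ℕ} (h : b ≤ t) : unvisited q X t b = X :=
  filter_true_of_mem fun p _ i hi => absurd (mem_Ico.1 hi) (by omega)

theorem unvisited_eq_succ {X : Finset α} {t b : ℕ} (h : q t ∉ X) :
    unvisited q X t b = unvisited q X (t + 1) b := by
  refine filter_congr fun p hp => ⟨fun H i hi => H i (Ico_subset_Ico_left t.le_succ hi),
    fun H i hi => ?_⟩
  rcases (mem_Ico.1 hi).1.eq_or_lt with rfl | hlt
  · exact fun hqp => h (hqp ▸ hp)
  · exact H i (mem_Ico.2 ⟨hlt, (mem_Ico.1 hi).2⟩)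

theorem visits_lt_of_mem_sdiff_unvisited {p : α} {X : Finset α} {a t b : ℕ} (hat : a ≤ t)
    (htb : t ≤ b) (hp : p ∈ X \ unvisited q X t b) : visits q p a t < visits q p a b := by
  obtain ⟨hpX, hp⟩ := mem_sdiff.1 hp
  obtain ⟨i, hi, hqi⟩ : ∃ i ∈ Ico t b, q i = p := by
    simpa [unvisited, hpX, and_assoc] using hp
  have hsplit : visits q p a b = visits q p a t + visits q p t b := by
    rw [visits, visits, visits, ← Ico_union_Ico_eq_Ico hat htb, filter_union,
      card_union_of_disjoint (disjoint_filter_filter (Ico_disjoint_Ico_consecutive a t b))]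
  have : 0 < visits q p t b := card_pos.2 ⟨i, mem_filter.2 ⟨hi, hqi⟩⟩
  omega

theorem visits_sdiff_unvisited_le {X : Finset α} {j u b : ℕ} (hub : u ≤ b)
    (hv : ∀ p ∈ X, visits q p 0 b ≤ j) : ∀ p ∈ X \ unvisited q X u b, visits q p 0 u ≤ j - 1 :=
  fun p hp => by
    have := visits_lt_of_mem_sdiff_unvisited u.zero_le hub hp
    have := hv p (mem_sdiff.1 hp).1
    omega

theorem visits_unvisited_le {X : Finset α} {j u b : ℕ} (hub : u ≤ b)
    (hv : ∀ p ∈ X, visits q p 0 b ≤ j) : ∀ p ∈ unvisited q X u b, visits q p 0 u ≤ j :=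
  fun p hp => (visits_mono hub).trans (hv p (unvisited_subset hp))

theorem le_card_sdiff_unvisited {X : Finset α} {m u b : ℕ} (hX : m * 2 ≤ #X)
    (hu : 2 * #(unvisited q X u b) < #X) : m ≤ #(X \ unvisited q X u b) := by
  rw [card_sdiff_of_subset unvisited_subset]
  omega

variable (q) in
/-- Scanning the prefix from its right end, take the first time `u` at which fewer than half of one
side is unvisited on `[u, b)`; at least half of the other side still is, since `q u` lies in at
most one side. -/
theorem exists_halving_time {A B : Finset α} (hAB : Disjoint A B) (b : ℕ) :
    (#A ≤ 2 * #(unvisited q A 0 b) ∧ #B ≤ 2 * #(unvisited q B 0 b)) ∨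
      ∃ u ≤ b, (#A ≤ 2 * #(unvisited q A u b) ∧ 2 * #(unvisited q B u b) < #B) ∨
        (2 * #(unvisited q A u b) < #A ∧ #B ≤ 2 * #(unvisited q B u b)) := by
  have hb : #A ≤ 2 * #(unvisited q A b b) ∧ #B ≤ 2 * #(unvisited q B b b) := by
    simp only [unvisited_of_le le_rfl]
    omega
  have hex : ∃ t, #A ≤ 2 * #(unvisited q A t b) ∧ #B ≤ 2 * #(unvisited q B t b) := ⟨b, hb⟩
  by_cases ht : Nat.find hex = 0
  · exact .inl (ht ▸ Nat.find_spec hex)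
  obtain ⟨u, ht⟩ := Nat.exists_eq_add_one_of_ne_zero ht
  have hfail := Nat.find_min hex (show u < Nat.find hex by omega)
  have hfound := ht ▸ Nat.find_spec hex
  refine .inr ⟨u, by have := Nat.find_min' hex hb; omega, ?_⟩
  by_cases hqu : q u ∈ A
  · rw [unvisited_eq_succ (X := B) (disjoint_left.1 hAB hqu)] at hfail ⊢
    omega
  · rw [unvisited_eq_succ hqu] at hfail ⊢
    omega

/-- Recursion at the halving time `u`: the visited part of one side is visited once less on
`[0, u)`, and the unvisited part of the other side is avoided on `[u, b)`. -/
theorem exists_altSplit {M jA jB b : ℕ} {A B : Finset α} (hAB : Disjoint A B)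
    (hvA : ∀ p ∈ A, visits q p 0 b ≤ jA) (hvB : ∀ p ∈ B, visits q p 0 b ≤ jB)
    (hA : M * 2 ^ (jA + jB - 1) ≤ #A) (hB : M * 2 ^ (jA + jB - 1) ≤ #B) :
    ∃ A' ⊆ A, ∃ B' ⊆ B, M ≤ #A' ∧ M ≤ #B' ∧ AltSplit q A' B' b (jA + jB + 2) := by
  have hMle : ∀ e, M ≤ M * 2 ^ e := fun e => Nat.le_mul_of_pos_right M (Nat.two_pow_pos e)
  by_cases hj : jA = 0 ∨ jB = 0
  · refine ⟨A, subset_rfl, B, subset_rfl, (hMle _).trans hA, (hMle _).trans hB,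
      AltSplit.of_avoids ?_ (by omega)⟩
    rcases hj with rfl | rfl
    exacts [.inl (avoids_of_visits_le_zero hvA), .inr (avoids_of_visits_le_zero hvB)]
  rw [show jA + jB - 1 = jA + jB - 2 + 1 by omega, pow_succ, ← mul_assoc] at hA hB
  have := hMle (jA + jB - 2)
  rcases exists_halving_time q hAB b with ⟨hA₀, hB₀⟩ | ⟨u, hub, ⟨hAu, hBu⟩ | ⟨hAu, hBu⟩⟩
  · exact ⟨unvisited q A 0 b, unvisited_subset, unvisited q B 0 b, unvisited_subset, by omega,
      by omega, AltSplit.of_avoids (.inl (avoids_unvisited A 0 b)) (by omega)⟩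
  · obtain ⟨A', hA', B', hB', hMA, hMB, hsplit⟩ := exists_altSplit (M := M) (jB := jB - 1)
      (disjoint_of_subset_left unvisited_subset (disjoint_of_subset_right sdiff_subset hAB))
      (visits_unvisited_le hub hvA) (visits_sdiff_unvisited_le hub hvB)
      (by rw [show jA + (jB - 1) - 1 = jA + jB - 2 by omega]; omega)
      (by rw [show jA + (jB - 1) - 1 = jA + jB - 2 by omega]; exact le_card_sdiff_unvisited hB hBu)
    rw [show jA + (jB - 1) + 2 = jA + jB + 1 by omega] at hsplit
    exact ⟨A', hA'.trans unvisited_subset, B', hB'.trans sdiff_subset, hMA, hMB,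
      hsplit.append hub (.inl ((avoids_unvisited A u b).mono hA'))⟩
  · obtain ⟨A', hA', B', hB', hMA, hMB, hsplit⟩ := exists_altSplit (M := M) (jA := jA - 1)
      (disjoint_of_subset_left sdiff_subset (disjoint_of_subset_right unvisited_subset hAB))
      (visits_sdiff_unvisited_le hub hvA) (visits_unvisited_le hub hvB)
      (by rw [show jA - 1 + jB - 1 = jA + jB - 2 by omega]; exact le_card_sdiff_unvisited hA hAu)
      (by rw [show jA - 1 + jB - 1 = jA + jB - 2 by omega]; omega)
    rw [show jA - 1 + jB + 2 = jA + jB + 1 by omega] at hsplit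
    exact ⟨A', hA'.trans sdiff_subset, B', hB'.trans unvisited_subset, hMA, hMB,
      hsplit.append hub (.inr ((avoids_unvisited B u b).mono hB'))⟩
termination_by jA + jB

theorem card_le_two_mul_card_filter_visits_lt [Fintype α] {k T : ℕ} (hk : 1 ≤ k)
    (hT : T ≤ k * Fintype.card α) : Fintype.card α ≤ 2 * #{p | visits q p 0 T < 2 * k} := by
  have hsum : ∑ p, visits q p 0 T = T := by
    have := card_eq_sum_card_fiberwise (f := q) (s := Ico 0 T) (t := univ) fun _ _ => mem_univ _
    rw [Nat.card_Ico, Nat.sub_zero] at this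
    exact this.symm
  have hbad : #{p | ¬visits q p 0 T < 2 * k} * (2 * k) ≤ k * Fintype.card α :=
    calc _ ≤ ∑ p ∈ {p | ¬visits q p 0 T < 2 * k}, visits q p 0 T :=
          smul_eq_mul (α := ℕ) .. ▸
            card_nsmul_le_sum _ _ _ fun p hp => not_lt.1 (mem_filter.1 hp).2
      _ ≤ ∑ p, visits q p 0 T := sum_le_sum_of_subset (subset_univ _)
      _ ≤ _ := hsum.le.trans hT
  have hsplit := card_filter_add_card_filter_not (s := univ) fun p => visits q p 0 T < 2 * k
  rw [card_univ] at hsplit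
  have : 2 * #{p | ¬visits q p 0 T < 2 * k} ≤ Fintype.card α :=
    Nat.le_of_mul_le_mul_right (by linarith) (show 0 < k by omega)
  omega

variable (q) in
theorem exists_disjoint_altSplit [Fintype α] {k T M : ℕ} (hk : 1 ≤ k)
    (hT : T ≤ k * Fintype.card α) (hM : 2 * M * 2 ^ (4 * k - 2) ≤ Fintype.card α) :
    ∃ A B : Finset α, Disjoint A B ∧ #A = M ∧ #B = M ∧ AltSplit q A B T (4 * k) := by
  set good : Finset α := {p | visits q p 0 T < 2 * k}
  have hgood : Fintype.card α ≤ 2 * #good := card_le_two_mul_card_filter_visits_lt hk hT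
  have hvgood : ∀ p ∈ good, visits q p 0 T ≤ 2 * k - 1 := fun p hp => by
    have := (mem_filter.1 hp).2
    omega
  have hM' : 4 * (M * 2 ^ (4 * k - 3)) ≤ Fintype.card α := by
    rw [show 4 * k - 2 = 4 * k - 3 + 1 by omega, pow_succ] at hM
    linarith
  obtain ⟨A₀, hA₀, hcardA₀⟩ := exists_subset_card_eq (s := good) (n := M * 2 ^ (4 * k - 3))
    (by omega)
  have hcardB₀ := card_sdiff_of_subset hA₀
  have hexp : 2 * k - 1 + (2 * k - 1) - 1 = 4 * k - 3 := by omega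
  obtain ⟨A₁, hA₁, B₁, hB₁, hMA, hMB, hsplit⟩ := exists_altSplit (b := T)
    (jA := 2 * k - 1) (jB := 2 * k - 1) (disjoint_sdiff (s := A₀) (t := good))
    (fun p hp => hvgood p (hA₀ hp)) (fun p hp => hvgood p (sdiff_subset hp))
    (by rw [hcardA₀, hexp]) (by rw [hexp]; omega)
  obtain ⟨A, hA, hcardA⟩ := exists_subset_card_eq hMA
  obtain ⟨B, hB, hcardB⟩ := exists_subset_card_eq hMB
  refine ⟨A, B, disjoint_of_subset_left (hA.trans hA₁)
    (disjoint_of_subset_right (hB.trans hB₁) disjoint_sdiff), hcardA, hcardB, ?_⟩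
  rw [show 4 * k = 2 * k - 1 + (2 * k - 1) + 2 by omega]
  exact hsplit.mono hA hB

end AltSplitting

theorem Nat.choose_mul_choose_le_add_choose (m n i j : ℕ) :
    m.choose i * n.choose j ≤ (m + n).choose (i + j) := by
  rw [Nat.add_choose_eq]
  exact single_le_sum (f := fun ij : ℕ × ℕ => m.choose ij.1 * n.choose ij.2)
    (a := (i, j)) (fun _ _ => Nat.zero_le _) (mem_antidiagonal.2 rfl)

theorem Nat.two_pow_le_choose_four_mul_sq {k : ℕ} (hk : 1 ≤ k) :
    2 ^ (4 * k - 2) ≤ (4 * k ^ 2).choose (2 * k) := by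
  induction k, hk using Nat.le_induction with
  | base => decide
  | succ k hk ih =>
    have h16 : 16 ≤ (8 * k + 4).choose 2 :=
      (show 16 ≤ (12 : ℕ).choose 2 by decide).trans (Nat.choose_le_choose 2 (by omega))
    rw [show 4 * (k + 1) ^ 2 = 4 * k ^ 2 + (8 * k + 4) by ring,
      show 2 * (k + 1) = 2 * k + 2 by ring, show 4 * (k + 1) - 2 = 4 * k - 2 + 4 by omega, pow_add]
    exact (Nat.mul_le_mul ih h16).trans (Nat.choose_mul_choose_le_add_choose ..)

theorem Nat.mul_two_pow_le_of_le_div_choose {k n N : ℕ} (hk : 1 ≤ k)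
    (hNn : (N : ℝ) ≤ n / (4 * k ^ 2).choose (2 * k)) : N * 2 ^ (4 * k - 2) ≤ n := by
  have hC := Nat.two_pow_le_choose_four_mul_sq hk
  have hpos : (0 : ℝ) < (4 * k ^ 2).choose (2 * k) := by
    exact_mod_cast (Nat.two_pow_pos _).trans_le hC
  exact (Nat.mul_le_mul_left N hC).trans (by exact_mod_cast (le_div_iff₀ hpos).1 hNn)

theorem List.getD_lt_of_forall_lt {l : List ℕ} {B : ℕ} (hB : 0 < B) (h : ∀ a ∈ l, a < B)
    (i : ℕ) : l.getD i 0 < B := by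
  rw [List.getD_eq_getElem?_getD]
  cases hi : l[i]? with
  | none => exact hB
  | some a => exact h a (List.mem_of_getElem? hi)

theorem medianBit_eq_of_perm {n : ℕ} {x : Fin n → Fin (2 * n)} {σ : List (Fin n)} {V : List ℕ}
    (hσ : ∀ p, p ∈ σ) (hV : V.Pairwise (· < ·))
    (hperm : (σ.map fun p => (x p : ℕ)).Perm V) :
    Function.Injective x ∧ medianBit n x = decide ((V.map (· + 1)).getD (n / 2 - 1) 0 % 2 = 1) := by
  refine ⟨fun p p' hpp' => List.inj_on_of_nodup_map (hperm.nodup_iff.2 hV.nodup) (hσ p) (hσ p')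
    (by rw [hpp']), ?_⟩
  have himage : univ.image (fun p => (x p : ℕ) + 1) = (V.map (· + 1)).toFinset := by
    rw [← List.toFinset_eq_of_perm _ _ (hperm.map (· + 1)), List.map_map]
    ext a
    simp [hσ]
  have hV' : (V.map (· + 1)).Pairwise (· < ·) := List.pairwise_map.2 (hV.imp (by omega))
  rw [medianBit, himage, (List.toFinset_sort _ hV'.nodup).2 (hV'.imp le_of_lt)]

-- The coercion `(a : ℕ)` in `lsbHalfKth` elaborates as a monadic lift of the whole list.
theorem lsbHalfKth_eq (N : ℕ) (s : Finset (Fin (2 * N))) :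
    lsbHalfKth N s = decide ((s.sort.map (·.val + 1)).getD (N / 2 - 1) 0 % 2 = 1) := by
  simp only [lsbHalfKth, bind_pure_comp, List.map_eq_map, List.map_map]
  rfl

namespace MedianReduction

variable {β : Type*} [LinearOrder β]

def assign (s : Finset β) (v : List ℕ) (p : β) : ℕ := v.getD (s.sort.idxOf p) 0

theorem map_assign (s : Finset β) {v : List ℕ} (h : #s = v.length) :
    s.sort.map (assign s v) = v :=
  List.ext_getElem (by simp [h]) fun i h₁ h₂ => by
    simp [assign, (sort_nodup s _).idxOf_getElem, List.getElem?_eq_getElem h₂]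

theorem assign_lt {s : Finset β} {v : List ℕ} {B : ℕ} (hB : 0 < B) (h : ∀ a ∈ v, a < B)
    (p : β) : assign s v p < B :=
  List.getD_lt_of_forall_lt hB h _

def shiftedSort {m : ℕ} (c : ℕ) (s : Finset (Fin m)) : List ℕ := s.sort.map (·.val + c)

theorem length_shiftedSort {m : ℕ} (c : ℕ) (s : Finset (Fin m)) :
    (shiftedSort c s).length = #s := by
  simp [shiftedSort]

theorem bounds_of_mem_shiftedSort {m c a : ℕ} {s : Finset (Fin m)} (ha : a ∈ shiftedSort c s) :
    c ≤ a ∧ a < c + m := by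
  obtain ⟨v, -, rfl⟩ := List.mem_map.1 ha
  omega

theorem shiftedSort_append_perm {m : ℕ} (c : ℕ) {x y : Finset (Fin m)} (hxy : Disjoint x y) :
    (shiftedSort c x ++ shiftedSort c y).Perm (shiftedSort c (x ∪ y)) := by
  rw [shiftedSort, shiftedSort, shiftedSort, ← List.map_append]
  refine (List.perm_of_nodup_nodup_toFinset_eq ?_ (sort_nodup _ _) ?_).map _
  · exact List.nodup_append.2 ⟨sort_nodup _ _, sort_nodup _ _, fun a ha b hb => by
      rintro rfl
      exact disjoint_left.1 hxy ((mem_sort _).1 ha) ((mem_sort _).1 hb)⟩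
  · simp [List.toFinset_append]

def paddingValues (h N : ℕ) : List ℕ := List.range h ++ (List.range h).map (· + (2 * h + 2 * N))

def sortedValues (h N : ℕ) (s : Finset (Fin (2 * N))) : List ℕ :=
  List.range h ++ shiftedSort (2 * h) s ++ (List.range h).map (· + (2 * h + 2 * N))

variable {h N : ℕ}

theorem pairwise_lt_sortedValues (s : Finset (Fin (2 * N))) :
    (sortedValues h N s).Pairwise (· < ·) := by
  simp only [sortedValues, List.pairwise_append, List.pairwise_lt_range, List.mem_append,
    List.mem_range, List.mem_map, List.pairwise_map, true_and]
  refine ⟨⟨List.pairwise_map.2 ((sortedLT_sort s).pairwise.imp (by simp)), fun a ha b hb => by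
    have := bounds_of_mem_shiftedSort hb; omega⟩, List.pairwise_lt_range.imp (by omega), ?_⟩
  rintro a (ha | ha) b ⟨c, hc, rfl⟩
  · omega
  · have := bounds_of_mem_shiftedSort ha; omega

theorem getD_map_succ_sortedValues {s : Finset (Fin (2 * N))} (hs : #s = N) (hN : Even N)
    (hN2 : 2 ≤ N) : ((sortedValues h N s).map (· + 1)).getD ((N + 2 * h) / 2 - 1) 0 =
      (s.sort.map (·.val + 1)).getD (N / 2 - 1) 0 + 2 * h := by
  obtain ⟨M, hM⟩ := hN
  rw [show (N + 2 * h) / 2 - 1 = h + (N / 2 - 1) by omega,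
    List.getD_eq_getElem _ _ (by simp [sortedValues, shiftedSort, hs]; omega),
    List.getD_eq_getElem _ _ (by simp [hs]; omega)]
  simp only [sortedValues, List.getElem_map, List.map_append]
  rw [List.getElem_append_left (by simp [shiftedSort, hs]; omega),
    List.getElem_append_right (by simp)]
  simp only [shiftedSort, List.getElem_map, List.length_map, List.length_range,
    Nat.add_sub_cancel_left]
  omega

def value (h N : ℕ) (PA PB : Finset (Fin (N + 2 * h))) (x y : Finset (Fin (2 * N)))
    (p : Fin (N + 2 * h)) : ℕ :=
  if p ∈ PA then assign PA (shiftedSort (2 * h) x) p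
  else if p ∈ PB then assign PB (shiftedSort (2 * h) y) p
  else assign (PA ∪ PB)ᶜ (paddingValues h N) p

theorem value_lt (PA PB : Finset (Fin (N + 2 * h))) (x y : Finset (Fin (2 * N)))
    (p : Fin (N + 2 * h)) : value h N PA PB x y p < 2 * (N + 2 * h) := by
  have hpos : 0 < 2 * (N + 2 * h) := by have := p.pos; omega
  have hshift (z : Finset (Fin (2 * N))) : ∀ a ∈ shiftedSort (2 * h) z, a < 2 * (N + 2 * h) :=
    fun a ha => by have := bounds_of_mem_shiftedSort ha; omega
  have hpad : ∀ a ∈ paddingValues h N, a < 2 * (N + 2 * h) := by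
    simp only [paddingValues, List.mem_append, List.mem_range, List.mem_map]
    omega
  unfold value
  split_ifs
  exacts [assign_lt hpos (hshift x) p, assign_lt hpos (hshift y) p, assign_lt hpos hpad p]

def input (h N : ℕ) (PA PB : Finset (Fin (N + 2 * h))) (x y : Finset (Fin (2 * N)))
    (p : Fin (N + 2 * h)) : Fin (2 * (N + 2 * h)) :=
  ⟨value h N PA PB x y p, value_lt PA PB x y p⟩

variable {PA PB : Finset (Fin (N + 2 * h))}

theorem input_eq_of_notMem_right {p : Fin (N + 2 * h)} (hp : p ∉ PB)
    (x y y' : Finset (Fin (2 * N))) : input h N PA PB x y p = input h N PA PB x y' p := by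
  simp [input, value, hp]

theorem input_eq_of_notMem_left {p : Fin (N + 2 * h)} (hp : p ∉ PA)
    (x x' y : Finset (Fin (2 * N))) : input h N PA PB x y p = input h N PA PB x' y p := by
  simp [input, value, hp]

theorem map_value (hPAB : Disjoint PA PB) {x y : Finset (Fin (2 * N))} (hx : #PA = #x)
    (hy : #PB = #y) (hN : #PA + #PB = N) :
    (PA.sort ++ PB.sort ++ (PA ∪ PB)ᶜ.sort).map (value h N PA PB x y) =
      shiftedSort (2 * h) x ++ shiftedSort (2 * h) y ++ paddingValues h N := by
  simp only [List.map_append]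
  congr 1
  congr 1
  · rw [List.map_congr_left fun p hp => ?_]
    · exact map_assign PA (by rw [length_shiftedSort, hx])
    · simp [value, (mem_sort _).1 hp]
  · rw [List.map_congr_left fun p hp => ?_]
    · exact map_assign PB (by rw [length_shiftedSort, hy])
    · have hp := (mem_sort _).1 hp
      simp [value, disjoint_right.1 hPAB hp, hp]
  · rw [List.map_congr_left fun p hp => ?_]
    · refine map_assign _ ?_
      rw [card_compl, card_union_of_disjoint hPAB, Fintype.card_fin]
      simp [paddingValues]
      omega
    · have hp := (mem_sort _).1 hp
      simp only [mem_compl, mem_union, not_or] at hp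
      simp [value, hp]

theorem map_value_perm (hPAB : Disjoint PA PB) {x y : Finset (Fin (2 * N))} (hx : #PA = #x)
    (hy : #PB = #y) (hN : #PA + #PB = N) (hxy : Disjoint x y) :
    ((PA.sort ++ PB.sort ++ (PA ∪ PB)ᶜ.sort).map (value h N PA PB x y)).Perm
      (sortedValues h N (x ∪ y)) := by
  rw [map_value hPAB hx hy hN, paddingValues, sortedValues, List.append_assoc _ _ (List.map _ _)]
  exact (List.perm_append_comm_assoc _ _ _).trans
    (((shiftedSort_append_perm _ hxy).append_right _).append_left _)

theorem medianBit_input (hPAB : Disjoint PA PB) (hPA : #PA = N / 2) (hPB : #PB = N / 2)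
    {x y : Finset (Fin (2 * N))} (hx : #x = N / 2) (hy : #y = N / 2) (hxy : Disjoint x y)
    (hN : Even N) (hN2 : 2 ≤ N) :
    Function.Injective (input h N PA PB x y) ∧
      medianBit (N + 2 * h) (input h N PA PB x y) = lsbHalfKth N (x ∪ y) := by
  have hN' : N / 2 + N / 2 = N := by obtain ⟨M, hM⟩ := hN; omega
  have hσ : ∀ p, p ∈ PA.sort ++ PB.sort ++ (PA ∪ PB)ᶜ.sort := fun p => by
    simp only [List.mem_append, mem_sort, mem_compl, mem_union]
    tauto
  obtain ⟨hinj, hmed⟩ := medianBit_eq_of_perm (x := input h N PA PB x y) hσ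
    (pairwise_lt_sortedValues (x ∪ y))
    (map_value_perm hPAB (hPA.trans hx.symm) (hPB.trans hy.symm) (by omega) hxy)
  refine ⟨hinj, hmed.trans ?_⟩
  rw [getD_map_succ_sortedValues (by rw [card_union_of_disjoint hxy]; omega) hN hN2, lsbHalfKth_eq]
  exact decide_eq_decide.2 (by omega)

end MedianReduction

/-- The `ℓ`-th message is the state after segment `ℓ`. -/
theorem Protocol.exists_run_eq_foldl {X Y Q : Type} [Fintype Q] {S : ℕ}
    (hQ : Fintype.card Q ≤ 2 ^ S) (t : ℕ) (q₀ : Q) (fA : ℕ → X → Q → Q) (fB : ℕ → Y → Q → Q)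
    (out : Q → Bool) :
    ∃ Pr : Protocol X Y t (fun _ => S) true, ∀ x y, Pr.run x y =
      out ((List.range t).foldl (fun s ℓ => if Even ℓ then fA ℓ x s else fB ℓ y s) q₀) := by
  obtain ⟨e⟩ : Nonempty (Q ↪ Fin (2 ^ S)) :=
    Function.Embedding.nonempty_of_card_le (by simpa using hQ)
  have : Nonempty Q := ⟨q₀⟩
  have hdec : ∀ s, Function.invFun e (e s) = s := Function.leftInverse_invFun e.injective
  let state (ℓ : ℕ) (prev : (j : ℕ) → j < ℓ → Fin (2 ^ S)) : Q :=
    if h : ℓ = 0 then q₀ else Function.invFun e (prev (ℓ - 1) (by omega))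
  let Pr : Protocol X Y t (fun _ => S) true :=
    { msgA := fun i x prev => e (fA i x (state i fun j hj => prev ⟨j, by omega⟩ hj))
      msgB := fun i y prev => e (fB i y (state i fun j hj => prev ⟨j, by omega⟩ hj))
      outA := fun _ tr => out (state t fun j hj => tr ⟨j, hj⟩)
      outB := fun _ tr => out (state t fun j hj => tr ⟨j, hj⟩) }
  refine ⟨Pr, fun x y => ?_⟩
  set F := fun s ℓ => if Even ℓ then fA ℓ x s else fB ℓ y s
  have htranscript : ∀ ℓ (hℓ : ℓ < t),
      Pr.transcript x y ⟨ℓ, hℓ⟩ = e ((List.range (ℓ + 1)).foldl F q₀) := by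
    intro ℓ
    induction ℓ using Nat.strong_induction_on with
    | _ ℓ ih =>
      intro hℓ
      have hstate : state ℓ (fun j hj => Pr.transcript x y ⟨j, by omega⟩) =
          (List.range ℓ).foldl F q₀ := by
        rcases ℓ with _ | ℓ
        · rfl
        · simp only [state, dif_neg (Nat.succ_ne_zero ℓ)]
          exact (congrArg _ (ih ℓ ℓ.lt_succ_self (by omega))).trans (hdec _)
      rw [Protocol.transcript, List.range_succ, List.foldl_append]
      by_cases he : Even ℓ
      · simp [sendsAlice, Nat.even_iff.1 he, Pr, hstate, F, he]
      · simp [sendsAlice, Nat.odd_iff.1 (Nat.not_even_iff_odd.1 he), Pr, hstate, F, he]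
  have hfinal : state t (fun j hj => Pr.transcript x y ⟨j, hj⟩) = (List.range t).foldl F q₀ := by
    rcases t with _ | t
    · rfl
    · simp only [state, dif_neg (Nat.succ_ne_zero t)]
      exact (congrArg _ (htranscript t t.lt_succ_self)).trans (hdec _)
  unfold Protocol.run
  split <;> exact congrArg out hfinal

namespace ObliviousProgram

variable {n T S : ℕ} (P : ObliviousProgram n T S) (x : Fin n → Fin (2 * n))

def stepAt (i : ℕ) (s : P.Q) : P.Q :=
  if h : i < T then P.step ⟨i, h⟩ s (x (P.query ⟨i, h⟩)) else s

def runFrom (a b : ℕ) (s : P.Q) : P.Q :=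
  (List.range' a (b - a)).foldl (fun s i => P.stepAt x i s) s

theorem run_eq_out_runFrom : P.run x = P.out (P.runFrom x 0 T P.start) := by
  rw [run, runFrom, Nat.sub_zero, List.range'_eq_map_range, ← List.map_coe_finRange_eq_range,
    List.map_map, List.foldl_map]
  simp [stepAt]

theorem runFrom_runFrom {a b c : ℕ} (hab : a ≤ b) (hbc : b ≤ c) (s : P.Q) :
    P.runFrom x b c (P.runFrom x a b s) = P.runFrom x a c s := by
  obtain ⟨d, rfl⟩ := Nat.exists_eq_add_of_le hab
  obtain ⟨e, rfl⟩ := Nat.exists_eq_add_of_le hbc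
  rw [runFrom, runFrom, runFrom, ← List.foldl_append, show a + d + e - a = d + e by omega,
    ← List.range'_append]
  simp

theorem runFrom_congr {x' : Fin n → Fin (2 * n)} {a b : ℕ}
    (h : ∀ i (hi : i < T), a ≤ i → i < b → x (P.query ⟨i, hi⟩) = x' (P.query ⟨i, hi⟩)) :
    P.runFrom x a b = P.runFrom x' a b := by
  funext s
  refine List.foldl_ext _ _ s fun s i hi => ?_
  rw [List.mem_range'_1] at hi
  unfold stepAt
  split_ifs with hiT
  · rw [h i hiT hi.1 (by omega)]
  · rfl

theorem foldl_runFrom {c : ℕ → ℕ} {r : ℕ} (hc : ∀ ℓ < r, c ℓ ≤ c (ℓ + 1)) (s : P.Q) :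
    (List.range r).foldl (fun s ℓ => P.runFrom x (c ℓ) (c (ℓ + 1)) s) s =
      P.runFrom x (c 0) (c r) s := by
  induction r with
  | zero => simp [runFrom]
  | succ r ih =>
    have hmono : ∀ m ≤ r, c 0 ≤ c m := fun m hm => by
      induction m with
      | zero => rfl
      | succ m ihm => exact (ihm (by omega)).trans (hc m (by omega))
    rw [List.range_succ, List.foldl_append, ih fun ℓ hℓ => hc ℓ (by omega), List.foldl_cons,
      List.foldl_nil, runFrom_runFrom _ _ (hmono r le_rfl) (hc r r.lt_succ_self)]

theorem exists_protocol_of_altSplit {X Y : Type} {q : ℕ → Fin n}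
    (hq : ∀ i (hi : i < T), q i = P.query ⟨i, hi⟩) {PA PB : Finset (Fin n)} {r : ℕ}
    (hsplit : AltSplitting.AltSplit q PA PB T r) (inA : X → Fin n → Fin (2 * n))
    (inB : Y → Fin n → Fin (2 * n)) (inp : X → Y → Fin n → Fin (2 * n))
    (hinA : ∀ x y, ∀ p ∉ PB, inp x y p = inA x p) (hinB : ∀ x y, ∀ p ∉ PA, inp x y p = inB y p) :
    ∃ Pr : Protocol X Y r (fun _ => S) true, ∀ x y, Pr.run x y = P.run (inp x y) := by
  obtain ⟨c, hc0, hcT, hc⟩ := hsplit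
  let _ := P.fintypeQ
  obtain ⟨Pr, hPr⟩ := Protocol.exists_run_eq_foldl P.card_le r P.start
    (fun ℓ x => P.runFrom (inA x) (c ℓ) (c (ℓ + 1)))
    (fun ℓ y => P.runFrom (inB y) (c ℓ) (c (ℓ + 1))) P.out
  refine ⟨Pr, fun x y => ?_⟩
  have hfold := P.foldl_runFrom (inp x y) (fun ℓ hℓ => (hc ℓ hℓ).1) P.start
  rw [hc0, hcT] at hfold
  rw [hPr, run_eq_out_runFrom, ← hfold]
  refine congrArg P.out (List.foldl_ext _ _ _ fun s ℓ hℓ => ?_)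
  have hℓ : ℓ < r := List.mem_range.1 hℓ
  have hagree : ∀ i (hi : i < T), c ℓ ≤ i → i < c (ℓ + 1) →
      P.query ⟨i, hi⟩ ∉ if Even ℓ then PB else PA := fun i hi hℓi hiℓ =>
    hq i hi ▸ (hc ℓ hℓ).2 i (mem_Ico.2 ⟨hℓi, hiℓ⟩)
  split_ifs with he
  · refine congrFun (P.runFrom_congr _ fun i hi hℓi hiℓ => (hinA x y _ ?_).symm) s
    simpa [he] using hagree i hi hℓi hiℓ
  · refine congrFun (P.runFrom_congr _ fun i hi hℓi hiℓ => (hinB x y _ ?_).symm) s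
    simpa [he] using hagree i hi hℓi hiℓ

end ObliviousProgram

/-- From an oblivious program with time `T ≤ k·n` and space `S` computing `MedianBit`,
one gets, for every even `2 ≤ N ≤ n / C(4k²,2k)`, a deterministic two-party protocol with
at most `4k+1` messages of at most `S` bits each that computes the least significant bit of
the `N/2`-th smallest element of the union of the players' disjoint `N/2`-element subsets
of `{1,…,2N}`. -/
theorem oblivious_to_protocol (n k S T : ℕ) (hn : Even n) (hk : 1 ≤ k) (hT : T ≤ k * n)
    (P : ObliviousProgram n T S) (hP : P.ComputesMedianBit)
    (N : ℕ) (hN : Even N) (hN2 : 2 ≤ N)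
    (hNn : (N : ℝ) ≤ (n : ℝ) / (Nat.choose (4 * k ^ 2) (2 * k) : ℝ)) :
    ∃ (t : ℕ) (m : Fin t → ℕ) (af : Bool)
      (Pr : Protocol (Finset (Fin (2 * N))) (Finset (Fin (2 * N))) t m af),
      t ≤ 4 * k + 1 ∧ (∀ i, m i ≤ S) ∧
      ∀ x y : Finset (Fin (2 * N)), x.card = N / 2 → y.card = N / 2 → Disjoint x y →
        Pr.run x y = lsbHalfKth N (x ∪ y) := by
  have hNC := Nat.mul_two_pow_le_of_le_div_choose hk hNn
  obtain ⟨h, rfl⟩ : ∃ h, n = N + 2 * h := by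
    have := Nat.le_mul_of_pos_right N (Nat.two_pow_pos (4 * k - 2))
    obtain ⟨a, ha⟩ := hn
    obtain ⟨b, hb⟩ := hN
    exact ⟨(n - N) / 2, by omega⟩
  let q : ℕ → Fin (N + 2 * h) := fun i => if hi : i < T then P.query ⟨i, hi⟩ else ⟨0, by omega⟩
  obtain ⟨PA, PB, hPAB, hPA, hPB, hsplit⟩ :=
    AltSplitting.exists_disjoint_altSplit q (M := N / 2) hk (by simpa using hT)
      (by rwa [Fintype.card_fin, Nat.mul_div_cancel' (even_iff_two_dvd.1 hN)])
  obtain ⟨Pr, hPr⟩ := P.exists_protocol_of_altSplit (fun i hi => dif_pos hi) hsplit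
    (fun x => MedianReduction.input h N PA PB x ∅) (fun y => MedianReduction.input h N PA PB ∅ y)
    (MedianReduction.input h N PA PB)
    (fun x y _ hp => MedianReduction.input_eq_of_notMem_right hp x y ∅)
    (fun x y _ hp => MedianReduction.input_eq_of_notMem_left hp x ∅ y)
  refine ⟨4 * k, _, true, Pr, by omega, fun _ => le_rfl, fun x y hx hy hxy => ?_⟩
  obtain ⟨hinj, hmed⟩ := MedianReduction.medianBit_input hPAB hPA hPB hx hy hxy hN hN2
  rw [hPr, hP _ hinj, hmed]
end

section
/- For all real numbers n, m and every natural number t, if n ≥ 4, m ≥ log₂ n, and m^(2^(t+1) − 2) > n / (log₂ n)^(9·2^t − 2), then (t : ℝ) ≥ log₂( (log₂ n) / (log₂ m) ) − 4. -/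
/-- If `n ≥ 4`, `m ≥ log₂ n`, and `m^(2^(t+1)−2) > n / (log₂ n)^(9·2^t−2)`, then
`t ≥ log₂(log₂ n / log₂ m) − 4`. -/
theorem rounds_lb_from_ineq (n m : ℝ) (t : ℕ) (hn : 4 ≤ n) (hm : Real.logb 2 n ≤ m)
    (h : m ^ (2 ^ (t + 1) - 2) > n / (Real.logb 2 n) ^ (9 * 2 ^ t - 2)) :
    (t : ℝ) ≥ Real.logb 2 (Real.logb 2 n / Real.logb 2 m) - 4 := by
  set L := Real.logb 2 n with hLdef
  set l := Real.logb 2 m with hldef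
  have hL2 : (2:ℝ) ≤ L := by
    have h4 : Real.logb 2 4 = 2 := by
      rw [show (4:ℝ) = 2^2 by norm_num, Real.logb_pow, Real.logb_self_eq_one (by norm_num : (1:ℝ)<2)]; norm_num
    calc (2:ℝ) = Real.logb 2 4 := h4.symm
      _ ≤ L := Real.logb_le_logb_of_le (by norm_num) (by norm_num) hn
  have hm2 : (2:ℝ) ≤ m := le_trans hL2 hm
  have hmpos : (0:ℝ) < m := by linarith
  have hLpos : (0:ℝ) < L := by linarith
  have hl1 : (1:ℝ) ≤ l := by
    calc (1:ℝ) = Real.logb 2 2 := (Real.logb_self_eq_one (by norm_num : (1:ℝ) < 2)).symm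
      _ ≤ l := Real.logb_le_logb_of_le (by norm_num) (by norm_num) hm2
  have hlpos : (0:ℝ) < l := by linarith
  have hlogL : Real.logb 2 L ≤ l := Real.logb_le_logb_of_le (by norm_num) (by linarith) hm
  by_contra hc
  push_neg at hc
  have hc4 : ((t + 4 : ℕ) : ℝ) < Real.logb 2 (L / l) := by push_cast; linarith
  have hdivpos : (0:ℝ) < L / l := div_pos hLpos hlpos
  have h2pow : (2:ℝ) ^ (t + 4) < L / l := by
    have := (Real.lt_logb_iff_rpow_lt (by norm_num : (1:ℝ) < 2) hdivpos).mp hc4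
    rwa [Real.rpow_natCast] at this
  have h16 : (2:ℝ) ^ (t + 4) * l < L := (lt_div_iff₀ hlpos).mp h2pow
  -- from h : n < m^E1 * L^E2
  have hLE2pos : (0:ℝ) < L ^ (9 * 2 ^ t - 2) := pow_pos hLpos _
  have hn' : n < m ^ (2 ^ (t + 1) - 2) * L ^ (9 * 2 ^ t - 2) :=
    (div_lt_iff₀ hLE2pos).mp h
  have hlog : L < ((2 ^ (t + 1) - 2 : ℕ) : ℝ) * l + ((9 * 2 ^ t - 2 : ℕ) : ℝ) * Real.logb 2 L := by
    have hnpos : (0:ℝ) < n := by linarith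
    have := Real.logb_lt_logb (by norm_num : (1:ℝ) < 2) hnpos hn'
    rwa [Real.logb_mul (by positivity) (by positivity), Real.logb_pow, Real.logb_pow] at this
  have hE1 : ((2 ^ (t + 1) - 2 : ℕ) : ℝ) = 2 ^ (t + 1) - 2 := by
    have : 2 ≤ 2 ^ (t + 1) := Nat.one_lt_two_pow (by omega)
    push_cast [Nat.cast_sub this]; ring
  have hE2 : ((9 * 2 ^ t - 2 : ℕ) : ℝ) = 9 * 2 ^ t - 2 := by
    have : 2 ≤ 9 * 2 ^ t := by have := Nat.one_le_two_pow (n := t); omega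
    push_cast [Nat.cast_sub this]; ring
  rw [hE1, hE2] at hlog
  have hP : (0:ℝ) < (2:ℝ) ^ t := by positivity
  have hpow4 : (2:ℝ) ^ (t + 4) = 16 * 2 ^ t := by ring
  have hpow1 : (2:ℝ) ^ (t + 1) = 2 * 2 ^ t := by ring
  have hlogLl : Real.logb 2 L ≤ l := hlogL
  nlinarith [mul_le_mul_of_nonneg_left hlogLl (show (0:ℝ) ≤ 9 * 2 ^ t - 2 by nlinarith),
    mul_pos hP hlpos]
end

section
/- Let U and V be finite types and μ a probability mass function on U × V. Let P be the marginal of μ on U, Q the marginal on V, and for each q ∈ V with Q(q) > 0 let P|Q=q denote the conditional distribution of the U-coordinate given that the V-coordinate equals q. Then ∑_{q : Q(q) > 0} Q(q) · ‖P − (P|Q=q)‖² ≤ (ln 2 / 2) · I(P;Q), where I(P;Q) = ∑_{u,v : μ(u,v) > 0} μ(u,v) · log₂( μ(u,v) / (P(u)·Q(v)) ) is the mutual information between the two coordinates. -/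
open scoped BigOperators

/-- Marginal of `μ` on the first coordinate. -/
noncomputable def margU {U V : Type*} [Fintype V] (μ : U × V → ℝ) (u : U) : ℝ :=
  ∑ v, μ (u, v)

/-- Marginal of `μ` on the second coordinate. -/
noncomputable def margV {U V : Type*} [Fintype U] (μ : U × V → ℝ) (v : V) : ℝ :=
  ∑ u, μ (u, v)

/-- Conditional distribution of the first coordinate given that the second equals `v`. -/
noncomputable def condU {U V : Type*} [Fintype U] (μ : U × V → ℝ) (v : V) (u : U) : ℝ :=
  μ (u, v) / margV μ v

/-- Total variation distance between two mass functions on a finite type. -/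
noncomputable def tvDist {U : Type*} [Fintype U] (p q : U → ℝ) : ℝ :=
  (1 / 2) * ∑ u, |p u - q u|

/-- Mutual information (base 2) between the two coordinates of `μ`. -/
noncomputable def mutInfo {U V : Type*} [Fintype U] [Fintype V] (μ : U × V → ℝ) : ℝ :=
  ∑ p ∈ Finset.univ.filter (fun p => 0 < μ p),
    μ p * Real.logb 2 (μ p / (margU μ p.1 * margV μ p.2))

/-!
For each `q` with `Q q > 0`, Pinsker's inequality bounds `‖P − P|Q=q‖²` by `½ KL(P|Q=q ‖ P)` in
nats, and the `Q`-average of these divergences is the mutual information in nats,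
`ln 2 · I(P;Q)`.

Pinsker's inequality follows from the pointwise bound `3 (a − b)² ≤ 2 (a + 2b) · b klFun (a/b)`,
itself equivalent to `log x ≥ (x − 1)(5x + 1) / (2x(x + 2))`, by Cauchy–Schwarz against the
weights `(a + 2b) / 3`, which sum to `1`.
-/

open Real InformationTheory

lemma hasDerivAt_log_sub_rational {x : ℝ} (hx : 0 < x) :
    HasDerivAt (fun y => log y - (y - 1) * (5 * y + 1) / (2 * y * (y + 2)))
      ((x - 1) ^ 3 / (x ^ 2 * (x + 2) ^ 2)) x := by
  have hnum : HasDerivAt (fun y : ℝ => (y - 1) * (5 * y + 1))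
      (1 * (5 * x + 1) + (x - 1) * (5 * 1)) x :=
    ((hasDerivAt_id' x).sub_const 1).mul (((hasDerivAt_id' x).const_mul 5).add_const 1)
  have hden : HasDerivAt (fun y : ℝ => 2 * y * (y + 2)) (2 * 1 * (x + 2) + 2 * x * 1) x :=
    ((hasDerivAt_id' x).const_mul 2).mul ((hasDerivAt_id' x).add_const 2)
  refine ((hasDerivAt_log hx.ne').sub (hnum.div hden (by positivity))).congr_deriv ?_
  field_simp
  ring

-- `log` minus the rational function has a derivative of the sign of `x - 1`, and vanishes at `1`.
lemma sub_one_mul_div_le_log {x : ℝ} (hx : 0 < x) :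
    (x - 1) * (5 * x + 1) / (2 * x * (x + 2)) ≤ log x := by
  set F : ℝ → ℝ := fun y => log y - (y - 1) * (5 * y + 1) / (2 * y * (y + 2))
  set F' : ℝ → ℝ := fun y => (y - 1) ^ 3 / (y ^ 2 * (y + 2) ^ 2)
  have hF : ∀ y ∈ Set.Ioi (0 : ℝ), HasDerivAt F (F' y) y :=
    fun y hy => hasDerivAt_log_sub_rational hy
  have hcont : ContinuousOn F (Set.Ioi 0) := fun y hy => (hF y hy).continuousAt.continuousWithinAt
  suffices F 1 ≤ F x by simpa [F] using this
  rcases le_total 1 x with h1x | hx1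
  · refine monotoneOn_of_hasDerivWithinAt_nonneg (f' := F') (convex_Icc 1 x)
      (hcont.mono fun y hy => one_pos.trans_le hy.1)
      (fun y hy => ?_) (fun y hy => ?_) ⟨le_rfl, h1x⟩ ⟨h1x, le_rfl⟩ h1x
    all_goals rw [interior_Icc] at hy
    · exact (hF y (one_pos.trans hy.1)).hasDerivWithinAt
    · have : 0 ≤ (y - 1) ^ 3 := pow_nonneg (by linarith [hy.1]) 3
      positivity
  · refine antitoneOn_of_hasDerivWithinAt_nonpos (f' := F') (convex_Icc x 1)
      (hcont.mono fun y hy => hx.trans_le hy.1)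
      (fun y hy => ?_) (fun y hy => ?_) ⟨le_rfl, hx1⟩ ⟨hx1, le_rfl⟩ hx1
    all_goals rw [interior_Icc] at hy
    · exact (hF y (hx.trans hy.1)).hasDerivWithinAt
    · exact div_nonpos_of_nonpos_of_nonneg
        (Odd.pow_nonpos (by decide) (by linarith [hy.2])) (by positivity)

lemma three_mul_sq_sub_one_le_klFun {x : ℝ} (hx : 0 ≤ x) :
    3 * (x - 1) ^ 2 ≤ 2 * (x + 2) * klFun x := by
  rcases hx.eq_or_lt with rfl | hx
  · norm_num [klFun_zero]
  have hlog := mul_le_mul_of_nonneg_left (sub_one_mul_div_le_log hx)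
    (by positivity : 0 ≤ 2 * x * (x + 2))
  rw [mul_div_cancel₀ _ (by positivity)] at hlog
  rw [klFun_apply]
  nlinarith

lemma mul_klFun_div_eq {a b : ℝ} (hab : b = 0 → a = 0) :
    b * klFun (a / b) = a * log (a / b) + b - a := by
  rcases eq_or_ne b 0 with rfl | hb
  · simp [hab rfl]
  · rw [klFun_apply]
    field_simp

lemma three_mul_sq_sub_le_mul_klFun {a b : ℝ} (ha : 0 ≤ a) (hb : 0 ≤ b) (hab : b = 0 → a = 0) :
    3 * (a - b) ^ 2 ≤ 2 * (a + 2 * b) * (b * klFun (a / b)) := by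
  rcases hb.eq_or_lt with rfl | hb
  · simp [hab rfl]
  set x := a / b
  have hax : a = b * x := by simp only [x]; field_simp
  calc 3 * (a - b) ^ 2 = b ^ 2 * (3 * (x - 1) ^ 2) := by rw [hax]; ring
    _ ≤ b ^ 2 * (2 * (x + 2) * klFun x) :=
      mul_le_mul_of_nonneg_left (three_mul_sq_sub_one_le_klFun (by positivity)) (sq_nonneg b)
    _ = 2 * (a + 2 * b) * (b * klFun x) := by rw [hax]; ring

lemma sq_tvDist_le_half_sum_mul_log {U : Type*} [Fintype U] {p q : U → ℝ}
    (hp : ∀ u, 0 ≤ p u) (hq : ∀ u, 0 ≤ q u) (hp1 : ∑ u, p u = 1) (hq1 : ∑ u, q u = 1)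
    (hpq : ∀ u, q u = 0 → p u = 0) :
    tvDist q p ^ 2 ≤ 1 / 2 * ∑ u, p u * log (p u / q u) := by
  have hsum : ∑ u, q u * klFun (p u / q u) = ∑ u, p u * log (p u / q u) := by
    simp only [mul_klFun_div_eq (hpq _), Finset.sum_sub_distrib, Finset.sum_add_distrib, hp1, hq1,
      add_sub_cancel_right]
  have hCS : (∑ u, |q u - p u|) ^ 2 ≤
      (∑ u, (p u + 2 * q u) / 3) * ∑ u, 2 * (q u * klFun (p u / q u)) := by
    refine Finset.sum_sq_le_sum_mul_sum_of_sq_le_mul _ (fun u _ => ?_) (fun u _ => ?_)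
      (fun u _ => ?_)
    · have := hp u; have := hq u; positivity
    · have := klFun_nonneg (div_nonneg (hp u) (hq u)); have := hq u; positivity
    · rw [sq_abs]
      nlinarith [three_mul_sq_sub_le_mul_klFun (hp u) (hq u) (hpq u)]
  have hw : ∑ u, (p u + 2 * q u) / 3 = 1 := by
    simp only [← Finset.sum_div, Finset.sum_add_distrib, ← Finset.mul_sum, hp1, hq1]
    norm_num
  rw [hw, one_mul, ← Finset.mul_sum, hsum] at hCS
  rw [tvDist]
  nlinarith

section Marginals

variable {U V : Type*} {μ : U × V → ℝ}

lemma margU_nonneg [Fintype V] (h0 : ∀ p, 0 ≤ μ p) (u : U) : 0 ≤ margU μ u :=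
  Finset.sum_nonneg fun v _ => h0 (u, v)

lemma margV_nonneg [Fintype U] (h0 : ∀ p, 0 ≤ μ p) (v : V) : 0 ≤ margV μ v :=
  Finset.sum_nonneg fun u _ => h0 (u, v)

lemma le_margU [Fintype V] (h0 : ∀ p, 0 ≤ μ p) (u : U) (v : V) : μ (u, v) ≤ margU μ u :=
  Finset.single_le_sum (fun v' _ => h0 (u, v')) (Finset.mem_univ v)

lemma eq_zero_of_margV_eq_zero [Fintype U] (h0 : ∀ p, 0 ≤ μ p) {v : V} (hv : margV μ v = 0)
    (u : U) : μ (u, v) = 0 :=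
  (Finset.sum_eq_zero_iff_of_nonneg fun u _ => h0 (u, v)).1 hv u (Finset.mem_univ u)

lemma sum_margU [Fintype U] [Fintype V] (h1 : ∑ p, μ p = 1) : ∑ u, margU μ u = 1 := by
  rw [← h1, Fintype.sum_prod_type]
  rfl

lemma condU_nonneg [Fintype U] (h0 : ∀ p, 0 ≤ μ p) (v : V) (u : U) : 0 ≤ condU μ v u :=
  div_nonneg (h0 (u, v)) (margV_nonneg h0 v)

lemma sum_condU [Fintype U] {v : V} (hv : margV μ v ≠ 0) : ∑ u, condU μ v u = 1 := by
  simp only [condU, ← Finset.sum_div]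
  exact div_self hv

lemma condU_eq_zero_of_margU_eq_zero [Fintype U] [Fintype V] (h0 : ∀ p, 0 ≤ μ p) {u : U}
    (hu : margU μ u = 0) (v : V) : condU μ v u = 0 := by
  rw [condU, le_antisymm (hu ▸ le_margU h0 u v) (h0 (u, v)), zero_div]

lemma margV_mul_sum_condU_mul_log [Fintype U] [Fintype V] (h0 : ∀ p, 0 ≤ μ p) (v : V) :
    margV μ v * ∑ u, condU μ v u * log (condU μ v u / margU μ u) =
      ∑ u, μ (u, v) * log (μ (u, v) / (margU μ u * margV μ v)) := by
  rcases eq_or_ne (margV μ v) 0 with hv | hv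
  · simp [hv, eq_zero_of_margV_eq_zero h0 hv]
  rw [Finset.mul_sum]
  refine Finset.sum_congr rfl fun u _ => ?_
  rw [condU, div_div, mul_comm (margV μ v) (margU μ u), ← mul_assoc, mul_div_cancel₀ _ hv]

lemma log_two_mul_mutInfo [Fintype U] [Fintype V] (h0 : ∀ p, 0 ≤ μ p) :
    log 2 * mutInfo μ = ∑ p, μ p * log (μ p / (margU μ p.1 * margV μ p.2)) := by
  rw [mutInfo, Finset.mul_sum, Finset.sum_filter_of_ne]
  · refine Finset.sum_congr rfl fun p _ => ?_
    rw [← log_div_log]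
    field_simp
  · intro p _ hp
    exact (h0 p).lt_of_ne fun h => hp (by simp [← h])

end Marginals

/-- Pinsker-type inequality: the expected squared total variation distance between the
marginal of the first coordinate and its conditional law given the second coordinate is at
most `(ln 2 / 2)` times the mutual information between the coordinates. -/
theorem expected_sq_tv_le_mutInfo {U V : Type*} [Fintype U] [Fintype V]
    (μ : U × V → ℝ) (h0 : ∀ p, 0 ≤ μ p) (h1 : ∑ p, μ p = 1) :
    ∑ v ∈ Finset.univ.filter (fun v => 0 < margV μ v),
        margV μ v * (tvDist (margU μ) (condU μ v)) ^ 2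
      ≤ (Real.log 2 / 2) * mutInfo μ := by
  have hpinsker : ∀ v, 0 < margV μ v → tvDist (margU μ) (condU μ v) ^ 2 ≤
      1 / 2 * ∑ u, condU μ v u * log (condU μ v u / margU μ u) := fun v hv =>
    sq_tvDist_le_half_sum_mul_log (condU_nonneg h0 v) (margU_nonneg h0) (sum_condU hv.ne')
      (sum_margU h1) fun u hu => condU_eq_zero_of_margU_eq_zero h0 hu v
  calc ∑ v ∈ Finset.univ.filter (fun v => 0 < margV μ v),
        margV μ v * (tvDist (margU μ) (condU μ v)) ^ 2
      ≤ ∑ v ∈ Finset.univ.filter (fun v => 0 < margV μ v),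
        margV μ v * (1 / 2 * ∑ u, condU μ v u * log (condU μ v u / margU μ u)) :=
        Finset.sum_le_sum fun v hv => mul_le_mul_of_nonneg_left
          (hpinsker v (Finset.mem_filter.1 hv).2) (margV_nonneg h0 v)
    _ = ∑ v, margV μ v * (1 / 2 * ∑ u, condU μ v u * log (condU μ v u / margU μ u)) :=
        Finset.sum_filter_of_ne fun v _ hv =>
          (margV_nonneg h0 v).lt_of_ne (left_ne_zero_of_mul hv).symm
    _ = 1 / 2 * ∑ p, μ p * log (μ p / (margU μ p.1 * margV μ p.2)) := by
        simp only [mul_left_comm (margV μ _), margV_mul_sum_condU_mul_log h0, ← Finset.mul_sum,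
          Fintype.sum_prod_type_right]
    _ = Real.log 2 / 2 * mutInfo μ := by
        rw [← log_two_mul_mutInfo h0]
        ring
end

section
/- Let n be a natural number divisible by 8, and let Δ, γ be natural numbers with Δ + γ ≤ n/40. Then C(n/4, n/8 − Δ) ≤ (1 + 10·(2Δ + γ)/n)^γ · C(n/4, n/8 − Δ − γ), where C(·,·) denotes the binomial coefficient and the inequality is between real numbers. -/
/-!
Since `C(M, k+1) / C(M, k) = (M - k) / (k + 1) = 1 + (M - 2k - 1) / (k + 1)`, and with `M = n/4`
every `k ≥ n/8 - Δ - γ` exceeds `n/10`, each of the `γ` consecutive ratios between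
`C(n/4, n/8 - Δ - γ)` and `C(n/4, n/8 - Δ)` is at most `1 + 10 (M - 2k - 1) / n`.
By AM-GM their product is at most the `γ`-th power of their mean, which is `1 + 10 (2Δ + γ) / n`.
-/

open Finset

theorem Nat.choose_succ_le_one_add_div_mul_choose {n k : ℕ} {t : ℝ} (ht : 0 < t)
    (htk : t ≤ k + 1) (hk : 2 * k + 1 ≤ n) :
    (n.choose (k + 1) : ℝ) ≤ (1 + (n - 2 * k - 1) / t) * n.choose k := by
  have hrec : (n.choose (k + 1) : ℝ) * (k + 1) = n.choose k * (n - k) := by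
    have := congrArg (Nat.cast (R := ℝ)) (Nat.choose_succ_right_eq n k)
    push_cast [Nat.cast_sub (by omega : k ≤ n)] at this
    exact this
  have hgap : (0 : ℝ) ≤ n - 2 * k - 1 := by
    have : ((2 * k + 1 : ℕ) : ℝ) ≤ n := by exact_mod_cast hk
    push_cast at this; linarith
  calc (n.choose (k + 1) : ℝ) = (1 + (n - 2 * k - 1) / (k + 1)) * n.choose k := by
        field_simp; linarith
    _ ≤ (1 + (n - 2 * k - 1) / t) * n.choose k := by gcongr

theorem le_prod_mul_of_forall_succ_le_mul {a r : ℕ → ℝ} {g : ℕ} (hr : ∀ i < g, 0 ≤ r i)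
    (ha : ∀ i < g, a (i + 1) ≤ r i * a i) : a g ≤ (∏ i ∈ range g, r i) * a 0 := by
  induction g with
  | zero => simp
  | succ g ih =>
    calc a (g + 1) ≤ r g * a g := ha g g.lt_succ_self
      _ ≤ r g * ((∏ i ∈ range g, r i) * a 0) := by
        gcongr
        · exact hr g g.lt_succ_self
        · exact ih (fun i hi => hr i (by omega)) (fun i hi => ha i (by omega))
      _ = (∏ i ∈ range (g + 1), r i) * a 0 := by rw [prod_range_succ]; ring

theorem Real.prod_le_pow_card_of_sum_le {ι : Type*} (s : Finset ι) {z : ι → ℝ} {c : ℝ}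
    (hz : ∀ i ∈ s, 0 ≤ z i) (hsum : ∑ i ∈ s, z i ≤ #s * c) : ∏ i ∈ s, z i ≤ c ^ #s := by
  rcases s.eq_empty_or_nonempty with rfl | hs
  · simp
  have hcard : (0 : ℝ) < #s := by exact_mod_cast hs.card_pos
  have hgm := Real.geom_mean_le_arith_mean_weighted s (fun _ => (#s : ℝ)⁻¹) z
    (fun _ _ => by positivity) (by simp [hcard.ne']) hz
  have hmean : ∑ i ∈ s, (#s : ℝ)⁻¹ * z i ≤ c := by
    rw [← mul_sum]; exact (inv_mul_le_iff₀ hcard).2 hsum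
  calc ∏ i ∈ s, z i = (∏ i ∈ s, z i ^ (#s : ℝ)⁻¹) ^ #s := by
        rw [← prod_pow]
        exact prod_congr rfl fun i hi =>
          (Real.rpow_inv_natCast_pow (hz i hi) hs.card_pos.ne').symm
    _ ≤ c ^ #s := by
        gcongr
        · exact prod_nonneg fun i hi => Real.rpow_nonneg (hz i hi) _
        · exact hgm.trans hmean

theorem sum_range_sub_two_mul_sub_one (c : ℝ) (g : ℕ) :
    ∑ i ∈ range g, (c - 2 * i - 1) = g * (c - g) := by
  induction g with
  | zero => simp
  | succ g ih => rw [sum_range_succ, ih]; push_cast; ring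

/-- For `n` divisible by `8` and `Δ + γ ≤ n/40`,
`C(n/4, n/8 − Δ) ≤ (1 + 10(2Δ+γ)/n)^γ · C(n/4, n/8 − Δ − γ)`. -/
theorem binom_ratio_bound (n Δ γ : ℕ) (h8 : 8 ∣ n) (h : Δ + γ ≤ n / 40) :
    (Nat.choose (n / 4) (n / 8 - Δ) : ℝ) ≤
      (1 + 10 * (2 * Δ + γ) / (n : ℝ)) ^ γ * (Nat.choose (n / 4) (n / 8 - Δ - γ) : ℝ) := by
  obtain ⟨N, rfl⟩ := h8
  set m := N - Δ - γ
  have hmN : (m : ℝ) + Δ + γ = N := by exact_mod_cast (by omega : m + Δ + γ = N)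
  rw [show 8 * N / 4 = 2 * N by omega, show 8 * N / 8 - Δ - γ = m by omega,
    show 8 * N / 8 - Δ = m + γ by omega]
  set r : ℕ → ℝ := fun i => 1 + (2 * (Δ + γ) - 2 * i - 1) / (8 * N / 10)
  have hr : ∀ i < γ, 0 ≤ r i := fun i hi => by
    have : (2 * i + 1 : ℝ) ≤ 2 * (Δ + γ) := by
      exact_mod_cast (by omega : 2 * i + 1 ≤ 2 * (Δ + γ))
    have : (0 : ℝ) ≤ 2 * (Δ + γ) - 2 * i - 1 := by linarith
    positivity
  have hstep : ∀ i < γ, ((2 * N).choose (m + i + 1) : ℝ) ≤ r i * (2 * N).choose (m + i) := by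
    intro i hi
    have hk : (4 * N : ℝ) ≤ 5 * (m + i + 1) := by
      exact_mod_cast (by omega : 4 * N ≤ 5 * (m + i + 1))
    convert Nat.choose_succ_le_one_add_div_mul_choose (n := 2 * N) (k := m + i) (t := 8 * N / 10)
      (by have : 0 < N := by omega
          positivity) (by push_cast; linarith) (by omega) using 3
    push_cast
    rw [← hmN]
    ring
  have hsum : ∑ i ∈ range γ, r i = γ * (1 + 10 * (2 * Δ + γ) / ((8 * N : ℕ) : ℝ)) := by
    simp only [r, sum_add_distrib, ← sum_div, sum_range_sub_two_mul_sub_one, sum_const,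
      card_range, nsmul_eq_mul]
    push_cast
    ring
  calc ((2 * N).choose (m + γ) : ℝ) ≤ (∏ i ∈ range γ, r i) * (2 * N).choose m :=
        le_prod_mul_of_forall_succ_le_mul (a := fun i => ((2 * N).choose (m + i) : ℝ)) hr hstep
    _ ≤ _ := by
        gcongr
        simpa only [card_range] using Real.prod_le_pow_card_of_sum_le (range γ)
          (fun i hi => hr i (mem_range.1 hi)) (by rw [hsum, card_range])
end

section
/- Let N be an even natural number and T ⊆ Fin N a subset with |T| = t ≥ 1. Then the number of subsets S ⊆ Fin N with |S| = N/2 such that |S ∩ T| < t/3 or |S ∩ T| > 2t/3 is at most 2 · exp(−t/18) · C(N, N/2), where C(·,·) is the binomial coefficient and the inequality is between real numbers. -/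
/-!
Chernoff bound through the exponential moment `∑_{|S| = n} 2^{|S ∩ T|}`. Expanding
`2^{|S ∩ T|}` as the number of subsets `A ⊆ S ∩ T` and counting, for each `A ⊆ T`, the
`n`-subsets of a `2n`-set containing `A` (at most `2^{-|A|} C(2n, n)` of them), the moment is at
most `(3/2)^t C(2n, n)`. Markov's inequality at level `2^{2t/3}` and
`(3/2) · 2^{-2/3} ≤ e^{-1/18}` bound the upper tail; complementation `S ↦ Sᶜ` swaps the two
tails.
-/

open Finset

theorem Nat.two_mul_choose_le_choose_succ_succ {m k : ℕ} (h : 2 * (k + 1) ≤ m + 1) :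
    2 * m.choose k ≤ (m + 1).choose (k + 1) := by
  refine Nat.le_of_mul_le_mul_right ?_ k.succ_pos
  calc 2 * m.choose k * (k + 1) = 2 * (k + 1) * m.choose k := by ring
    _ ≤ (m + 1) * m.choose k := by gcongr
    _ = (m + 1).choose (k + 1) * (k + 1) := m.add_one_mul_choose_eq k

theorem Nat.two_pow_mul_choose_sub_le_choose (n : ℕ) :
    ∀ a ≤ n, 2 ^ a * (2 * n - a).choose (n - a) ≤ (2 * n).choose n
  | 0, _ => by simp
  | a + 1, h => by
    have step := Nat.two_mul_choose_le_choose_succ_succ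
      (m := 2 * n - (a + 1)) (k := n - (a + 1)) (by omega)
    rw [show 2 * n - (a + 1) + 1 = 2 * n - a by omega,
      show n - (a + 1) + 1 = n - a by omega] at step
    calc 2 ^ (a + 1) * (2 * n - (a + 1)).choose (n - (a + 1))
        = 2 ^ a * (2 * (2 * n - (a + 1)).choose (n - (a + 1))) := by ring
      _ ≤ 2 ^ a * (2 * n - a).choose (n - a) := by gcongr
      _ ≤ (2 * n).choose n := Nat.two_pow_mul_choose_sub_le_choose n a (by omega)

-- `(3/2) · 2^{-2/3} ≤ e^{-1/18}` is `3^18 · e ≤ 2^30`, and `2^30 / 3^18 ≈ 2.7715`.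
theorem Real.three_halves_pow_le (t : ℕ) :
    (3 / 2 : ℝ) ^ t ≤ Real.exp (-t / 18) * 2 ^ (2 * t / 3 : ℝ) := by
  have he : Real.exp 1 ≤ 2 ^ 30 / 3 ^ 18 := (Real.exp_one_lt_d9.trans (by norm_num)).le
  have hlog : 1 ≤ 30 * Real.log 2 - 18 * Real.log 3 := by
    have := Real.log_le_log (Real.exp_pos 1) he
    rwa [Real.log_exp, Real.log_div (by norm_num) (by norm_num), Real.log_pow,
      Real.log_pow] at this
  rw [← Real.rpow_natCast, Real.rpow_def_of_pos (by norm_num), Real.rpow_def_of_pos two_pos,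
    ← Real.exp_add, Real.exp_le_exp, Real.log_div (by norm_num) (by norm_num)]
  nlinarith [(t.cast_nonneg : (0 : ℝ) ≤ t)]

namespace Finset

variable {α : Type*} [Fintype α] [DecidableEq α]

theorem card_powersetCard_filter_superset {n : ℕ} {A : Finset α} (hA : #A ≤ n) :
    #((powersetCard n univ).filter (A ⊆ ·)) = (Fintype.card α - #A).choose (n - #A) := by
  rw [← card_compl, ← card_powersetCard]
  refine card_nbij' (· \ A) (· ∪ A) ?_ ?_ ?_ ?_ <;> intro S hS <;>
    simp only [mem_coe, mem_filter, mem_powersetCard, subset_univ, true_and,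
      subset_compl_iff_disjoint_right] at hS ⊢
  · exact ⟨disjoint_sdiff_self_left, by rw [card_sdiff_of_subset hS.2, hS.1]⟩
  · exact ⟨by rw [card_union_of_disjoint hS.1, hS.2]; omega, subset_union_right⟩
  · exact sdiff_union_of_subset hS.2
  · exact union_sdiff_cancel_right hS.1

theorem sum_two_pow_card_inter_eq_sum_card_superset (n : ℕ) (T : Finset α) :
    ∑ S ∈ powersetCard n univ, 2 ^ #(S ∩ T)
      = ∑ A ∈ T.powerset, #((powersetCard n univ).filter (A ⊆ ·)) := by
  have h : ∀ S : Finset α, 2 ^ #(S ∩ T) = ∑ A ∈ T.powerset, if A ⊆ S then 1 else 0 := by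
    intro S
    rw [sum_boole, ← card_powerset, Nat.cast_id]
    congr 1
    ext A
    simp only [mem_powerset, mem_filter, subset_inter_iff]
    tauto
  simp only [h, card_filter]
  exact sum_comm

theorem two_pow_card_mul_card_superset_le {n : ℕ} (hα : Fintype.card α = 2 * n)
    (A : Finset α) : 2 ^ #A * #((powersetCard n univ).filter (A ⊆ ·)) ≤ (2 * n).choose n := by
  by_cases hA : #A ≤ n
  · rw [card_powersetCard_filter_superset hA, hα]
    exact Nat.two_pow_mul_choose_sub_le_choose n #A hA
  · have : (powersetCard n univ).filter (A ⊆ ·) = ∅ :=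
      filter_false_of_mem fun S hS hAS => hA ((card_le_card hAS).trans (mem_powersetCard.1 hS).2.le)
    simp [this]

theorem sum_two_pow_card_inter_le {n : ℕ} (hα : Fintype.card α = 2 * n) (T : Finset α) :
    ∑ S ∈ powersetCard n univ, (2 : ℝ) ^ #(S ∩ T) ≤ (3 / 2) ^ #T * (2 * n).choose n := by
  have hsuperset (A : Finset α) :
      (#((powersetCard n univ).filter (A ⊆ ·)) : ℝ) ≤ (1 / 2) ^ #A * (2 * n).choose n := by
    rw [one_div_pow, div_mul_eq_mul_div, one_mul, le_div_iff₀ (by positivity), mul_comm]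
    exact_mod_cast two_pow_card_mul_card_superset_le hα A
  calc ∑ S ∈ powersetCard n univ, (2 : ℝ) ^ #(S ∩ T)
      = ∑ A ∈ T.powerset, (#((powersetCard n univ).filter (A ⊆ ·)) : ℝ) := by
        exact_mod_cast sum_two_pow_card_inter_eq_sum_card_superset n T
    _ ≤ ∑ A ∈ T.powerset, (1 / 2 : ℝ) ^ #A * (2 * n).choose n :=
        sum_le_sum fun A _ => hsuperset A
    _ = (3 / 2) ^ #T * (2 * n).choose n := by
        rw [← sum_mul, show (3 / 2 : ℝ) = 1 / 2 + 1 by norm_num, ← sum_pow_mul_eq_add_pow]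
        simp

theorem card_filter_two_thirds_lt_card_inter_le {n : ℕ} (hα : Fintype.card α = 2 * n)
    (T : Finset α) :
    (#((powersetCard n univ).filter fun S => 2 * #T / 3 < (#(S ∩ T) : ℝ)) : ℝ)
      ≤ Real.exp (-#T / 18) * (2 * n).choose n := by
  set U := (powersetCard n univ).filter fun S => 2 * #T / 3 < (#(S ∩ T) : ℝ)
  have hX : (0 : ℝ) < 2 ^ (2 * #T / 3 : ℝ) := by positivity
  refine le_of_mul_le_mul_right ?_ hX
  calc (#U : ℝ) * 2 ^ (2 * #T / 3 : ℝ) ≤ ∑ S ∈ U, (2 : ℝ) ^ #(S ∩ T) := by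
        rw [← nsmul_eq_mul]
        refine card_nsmul_le_sum _ _ _ fun S hS => ?_
        rw [← Real.rpow_natCast]
        exact Real.rpow_le_rpow_of_exponent_le one_le_two (mem_filter.1 hS).2.le
    _ ≤ ∑ S ∈ powersetCard n univ, (2 : ℝ) ^ #(S ∩ T) :=
        sum_le_sum_of_subset_of_nonneg (filter_subset _ _) fun _ _ _ => by positivity
    _ ≤ (3 / 2) ^ #T * (2 * n).choose n := sum_two_pow_card_inter_le hα T
    _ ≤ Real.exp (-#T / 18) * 2 ^ (2 * #T / 3 : ℝ) * (2 * n).choose n := by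
        gcongr
        exact Real.three_halves_pow_le #T
    _ = Real.exp (-#T / 18) * (2 * n).choose n * 2 ^ (2 * #T / 3 : ℝ) := by ring

theorem card_filter_card_inter_lt_third_eq {n : ℕ} (hα : Fintype.card α = 2 * n)
    (T : Finset α) :
    #((powersetCard n univ).filter fun S => (#(S ∩ T) : ℝ) < #T / 3)
      = #((powersetCard n univ).filter fun S => 2 * #T / 3 < (#(S ∩ T) : ℝ)) := by
  have hsplit (S : Finset α) : (#(Sᶜ ∩ T) : ℝ) = #T - #(S ∩ T) := by
    rw [eq_sub_iff_add_eq, inter_comm, inter_comm S, ← sdiff_eq_inter_compl]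
    exact_mod_cast card_sdiff_add_card_inter T S
  refine card_nbij' compl compl ?_ ?_ (fun S _ => compl_compl S) (fun S _ => compl_compl S) <;>
    intro S hS <;>
    simp only [mem_coe, mem_filter, mem_powersetCard, subset_univ, true_and, card_compl,
      hsplit] at hS ⊢
  all_goals exact ⟨by omega, by linarith⟩

end Finset

theorem hoeffding_subset_count_general (N t : ℕ) (hN : Even N) (T : Finset (Fin N))
    (hT : T.card = t) :
    ((Finset.univ.filter fun S : Finset (Fin N) =>
        S.card = N / 2 ∧
          (((S ∩ T).card : ℝ) < t / 3 ∨ ((S ∩ T).card : ℝ) > 2 * t / 3)).card : ℝ) ≤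
      2 * Real.exp (-(t : ℝ) / 18) * (Nat.choose N (N / 2) : ℝ) := by
  subst hT
  have hcard : Fintype.card (Fin N) = 2 * (N / 2) := by
    rw [Fintype.card_fin, Nat.two_mul_div_two_of_even hN]
  set L := (powersetCard (N / 2) univ).filter fun S => (#(S ∩ T) : ℝ) < #T / 3
  set U := (powersetCard (N / 2) univ).filter fun S => 2 * #T / 3 < (#(S ∩ T) : ℝ)
  have hLU : #L = #U := card_filter_card_inter_lt_third_eq hcard T
  have hU := card_filter_two_thirds_lt_card_inter_le hcard T
  rw [← hcard, Fintype.card_fin] at hU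
  calc _ = (#(L ∪ U) : ℝ) := by
        congr 2
        ext S
        simp [L, U, mem_powersetCard, and_or_left]
    _ ≤ #L + #U := by exact_mod_cast card_union_le L U
    _ ≤ 2 * Real.exp (-(#T : ℝ) / 18) * (N.choose (N / 2) : ℝ) := by
        rw [hLU, ← two_mul, mul_assoc]
        gcongr

/-- For an even `N` and a `t`-element subset `T` of `Fin N` with `t ≥ 1`, the number of
`N/2`-element subsets `S` whose intersection with `T` has fewer than `t/3` or more than
`2t/3` elements is at most `2 · e^(−t/18) · C(N, N/2)`. -/
theorem hoeffding_subset_count (N t : ℕ) (hN : Even N) (T : Finset (Fin N))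
    (hT : T.card = t) (ht : 1 ≤ t) :
    ((Finset.univ.filter fun S : Finset (Fin N) =>
        S.card = N / 2 ∧
          (((S ∩ T).card : ℝ) < t / 3 ∨ ((S ∩ T).card : ℝ) > 2 * t / 3)).card : ℝ) ≤
      2 * Real.exp (-(t : ℝ) / 18) * (Nat.choose N (N / 2) : ℝ) :=
  hoeffding_subset_count_general N t hN T hT
end

section
/- Let D and R be finite types and let f : (Fin n → D) → R be a symmetric function, i.e., f(x ∘ π) = f(x) for every x : Fin n → D and every permutation π of Fin n. If f is computed by a read-once D-way branching program with σ nodes, then f is computed by a read-once D-way branching program with σ nodes in which, along every directed path from the source to a sink, the sequence of queried input indices is strictly increasing (in particular, the program is oblivious read-once). -/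
/-- A `D`-way branching program on inputs `x : Fin n → D` with output labels in `R`:
a finite set of nodes; each node is either an internal node labeled by an input index with
one successor per value in `D`, or a sink labeled by an output value. Acyclicity is
witnessed by a rank function decreasing along edges. -/
structure BranchingProgram (n : ℕ) (D R : Type*) where
  V : Type
  [fintypeV : Fintype V]
  source : V
  label : V → (Fin n × (D → V)) ⊕ R
  rank : V → ℕ
  wf : ∀ v i f d, label v = Sum.inl (i, f) → rank (f d) < rank v

attribute [instance] BranchingProgram.fintypeV

/-- The value computed from node `v` on input `x`. -/
def BranchingProgram.eval {n : ℕ} {D R : Type*} (B : BranchingProgram n D R)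
    (x : Fin n → D) (v : B.V) : R :=
  match h : B.label v with
  | Sum.inr r => r
  | Sum.inl (i, f) => B.eval x (f (x i))
termination_by B.rank v
decreasing_by exact B.wf v i f (x i) h

/-- There is an edge from `u` to `v`. -/
def BranchingProgram.Edge {n : ℕ} {D R : Type*} (B : BranchingProgram n D R)
    (u v : B.V) : Prop :=
  ∃ i f d, B.label u = Sum.inl (i, f) ∧ f d = v

/-- The input index queried at a node (`none` for sinks). -/
def BranchingProgram.qIdx {n : ℕ} {D R : Type*} (B : BranchingProgram n D R)
    (v : B.V) : Option (Fin n) :=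
  Sum.elim (fun q => some q.1) (fun _ => none) (B.label v)

/-- Read-once: along every directed path from the source, queried indices are distinct. -/
def BranchingProgram.ReadOnce {n : ℕ} {D R : Type*} (B : BranchingProgram n D R) : Prop :=
  ∀ p : List B.V, List.Chain B.Edge B.source p →
    ((B.source :: p).filterMap B.qIdx).Nodup

/-!
Relabel every internal node `v` so that it queries index `n - height v`, where `height v` is the
largest number of queries on a path starting at `v`. Along a path from the source of a read-once
program at most `n` indices are queried, so reachable heights are at most `n`, and the new
indices strictly increase along every path. On input `x` the relabeled program follows a path
on which both the old and the new queried indices are repetition-free, so some permutation `π`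
sends each old index to the new one along that path; the original program then follows the same
path on `x ∘ π`, and symmetry gives `f (x ∘ π) = f x`.
-/

theorem List.IsChain.filterMap {α β : Type*} {r : α → α → Prop} {s : β → β → Prop}
    {f : α → Option β} {l : List α} (hl : l.IsChain r)
    (hsome : ∀ a b, r a b → (f a).isSome)
    (hrel : ∀ a b, r a b → ∀ x ∈ f a, ∀ y ∈ f b, s x y) :
    (l.filterMap f).IsChain s := by
  induction hl with
  | nil => exact .nil
  | singleton a => cases h : f a <;> simp [h]
  | @cons_cons a b l hab hbl ih =>
    obtain ⟨x, hx⟩ := Option.isSome_iff_exists.1 (hsome a b hab)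
    rw [List.filterMap_cons_some hx]
    refine ih.cons fun y hy => hrel a b hab x hx y ?_
    cases hb : f b with
    | some z => simp_all
    | none =>
      cases l with
      | nil => simp_all
      | cons c l => simpa [hb] using hsome b c hbl.rel

theorem List.exists_perm_apply_fst_eq_snd {α : Type*} [DecidableEq α] :
    ∀ P : List (α × α), (P.map Prod.fst).Nodup → (P.map Prod.snd).Nodup →
      ∃ π : Equiv.Perm α, ∀ p ∈ P, π p.1 = p.2
  | [], _, _ => ⟨1, by simp⟩
  | (a, b) :: P, hfst, hsnd => by
    obtain ⟨ha : a ∉ P.map Prod.fst, h₁⟩ := List.nodup_cons.1 hfst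
    obtain ⟨hb : b ∉ P.map Prod.snd, h₂⟩ := List.nodup_cons.1 hsnd
    obtain ⟨π, hπ⟩ := exists_perm_apply_fst_eq_snd P h₁ h₂
    refine ⟨Equiv.swap (π a) b * π, ?_⟩
    rintro ⟨c, d⟩ hcd
    rcases List.mem_cons.1 hcd with hhead | hmem
    · simp_all
    · have hc : π c = d := hπ _ hmem
      have hda : d ≠ π a := by
        rintro rfl
        have hca : c = a := π.injective hc
        exact ha (hca ▸ List.mem_map_of_mem (f := Prod.fst) hmem)
      have hdb : d ≠ b := by
        rintro rfl
        exact hb (List.mem_map_of_mem (f := Prod.snd) hmem)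
      simp [hc, Equiv.swap_apply_of_ne_of_ne hda hdb]

namespace BranchingProgram

variable {n : ℕ} {D R : Type*} (B : BranchingProgram n D R)

theorem wellFounded_edge : WellFounded fun w v => B.Edge v w :=
  Subrelation.wf (fun ⟨_, _, _, hl, hw⟩ => hw ▸ B.wf _ _ _ _ hl)
    (InvImage.wf B.rank wellFounded_lt)

variable {B}

theorem eval_of_label_inr (x : Fin n → D) {v : B.V} {r : R} (h : B.label v = .inr r) :
    B.eval x v = r := by
  rw [eval]; split <;> simp_all

theorem eval_of_label_inl (x : Fin n → D) {v : B.V} {i : Fin n} {c : D → B.V}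
    (h : B.label v = .inl (i, c)) : B.eval x v = B.eval x (c (x i)) := by
  rw [eval]; split <;> simp_all

variable (B)

def run (x : Fin n → D) (v : B.V) : List B.V :=
  match h : B.label v with
  | .inr _ => []
  | .inl (i, c) => c (x i) :: run x (c (x i))
termination_by B.rank v
decreasing_by exact B.wf v i c (x i) h

variable {B}

theorem run_of_label_inr (x : Fin n → D) {v : B.V} {r : R} (h : B.label v = .inr r) :
    B.run x v = [] := by
  rw [run]; split <;> simp_all

theorem run_of_label_inl (x : Fin n → D) {v : B.V} {i : Fin n} {c : D → B.V}
    (h : B.label v = .inl (i, c)) : B.run x v = c (x i) :: B.run x (c (x i)) := by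
  rw [run]; split <;> simp_all

variable (B)

theorem isChain_run (x : Fin n → D) (v : B.V) : (v :: B.run x v).IsChain B.Edge := by
  induction v using B.wellFounded_edge.induction with
  | _ v ih =>
    cases h : B.label v with
    | inr r => simp [run_of_label_inr x h]
    | inl q =>
      obtain ⟨i, c⟩ := q
      have hedge : B.Edge v (c (x i)) := ⟨i, c, x i, h, rfl⟩
      rw [run_of_label_inl x h]
      exact (ih _ hedge).cons_cons hedge

theorem Edge.isSome_qIdx {u w : B.V} (h : B.Edge u w) : (B.qIdx u).isSome := by
  obtain ⟨i, c, d, hl, -⟩ := h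
  simp [qIdx, hl]

def reindex (τ : B.V → Fin n → Fin n) : BranchingProgram n D R where
  V := B.V
  source := B.source
  label v := Sum.map (fun q => (τ v q.1, q.2)) id (B.label v)
  rank := B.rank
  wf v i c d h := by
    cases hl : B.label v with
    | inr r => simp [hl] at h
    | inl q =>
      simp only [hl, Sum.map_inl, Sum.inl.injEq, Prod.mk.injEq] at h
      exact h.2 ▸ B.wf v q.1 q.2 d hl

variable {B} (τ : B.V → Fin n → Fin n)

theorem reindex_label_of_label_inr {v : B.V} {r : R} (h : B.label v = .inr r) :
    (B.reindex τ).label v = .inr r := by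
  simp [reindex, h]

theorem reindex_label_of_label_inl {v : B.V} {i : Fin n} {c : D → B.V}
    (h : B.label v = .inl (i, c)) : (B.reindex τ).label v = .inl (τ v i, c) := by
  simp [reindex, h]

theorem edge_reindex : (B.reindex τ).Edge = B.Edge := by
  ext u w
  cases hl : B.label u with
  | inr r => simp [Edge, reindex_label_of_label_inr τ hl, hl]
  | inl q =>
    obtain ⟨i, c⟩ := q
    constructor <;> rintro ⟨j, f, d, h, rfl⟩
    · rw [reindex_label_of_label_inl τ hl] at h
      cases h
      exact ⟨i, c, d, hl, rfl⟩
    · rw [hl] at h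
      cases h
      exact ⟨τ u i, c, d, reindex_label_of_label_inl τ hl, rfl⟩

theorem qIdx_reindex (v : B.V) : (B.reindex τ).qIdx v = (B.qIdx v).map (τ v) := by
  cases hl : B.label v with
  | inr r => simp [qIdx, reindex_label_of_label_inr τ hl, hl]
  | inl q => simp [qIdx, reindex_label_of_label_inl τ hl, hl]

theorem eval_reindex {x y : Fin n → D} {v : B.V}
    (h : ∀ w ∈ v :: (B.reindex τ).run x v, ∀ i, B.qIdx w = some i → y i = x (τ w i)) :
    B.eval y v = (B.reindex τ).eval x v := by
  induction v using B.wellFounded_edge.induction with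
  | _ v ih =>
    cases hl : B.label v with
    | inr r =>
      rw [eval_of_label_inr y hl, eval_of_label_inr x (reindex_label_of_label_inr τ hl)]
    | inl q =>
      obtain ⟨i, c⟩ := q
      have hl' := reindex_label_of_label_inl τ hl
      have hyx : y i = x (τ v i) := h v List.mem_cons_self i (by simp [qIdx, hl])
      rw [eval_of_label_inl y hl, eval_of_label_inl x hl', hyx]
      refine ih _ ⟨i, c, _, hl, rfl⟩ fun w hw => h w ?_
      rw [run_of_label_inl x hl']
      exact List.mem_cons_of_mem _ hw

theorem exists_perm_eval_reindex (hB : B.ReadOnce) (hB' : (B.reindex τ).ReadOnce)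
    (x : Fin n → D) :
    ∃ π : Equiv.Perm (Fin n),
      (B.reindex τ).eval x (B.reindex τ).source = B.eval (x ∘ π) B.source := by
  set L := B.source :: (B.reindex τ).run x B.source
  have hL' : L.IsChain (B.reindex τ).Edge := (B.reindex τ).isChain_run x B.source
  have hL : L.IsChain B.Edge := edge_reindex τ ▸ hL'
  set P := L.filterMap fun w => (B.qIdx w).map fun i => (i, τ w i)
  have hfst : P.map Prod.fst = L.filterMap B.qIdx := by
    simp [P, List.map_filterMap, Option.map_map, Function.comp_def]
  have hsnd : P.map Prod.snd = L.filterMap (B.reindex τ).qIdx := by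
    rw [funext (qIdx_reindex τ)]
    simp only [P, List.map_filterMap, Option.map_map]
    rfl
  obtain ⟨π, hπ⟩ :=
    List.exists_perm_apply_fst_eq_snd P (hfst ▸ hB _ hL) (hsnd ▸ hB' _ hL')
  refine ⟨π, (eval_reindex τ fun w hw i hi => ?_).symm⟩
  exact congrArg x (hπ (i, τ w i) (List.mem_filterMap.2 ⟨w, hw, by simp [hi]⟩))

variable (B)

def QueriesIncreasing : Prop :=
  ∀ p : List B.V, (B.source :: p).IsChain B.Edge →
    ((B.source :: p).filterMap B.qIdx).IsChain (· < ·)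

theorem QueriesIncreasing.readOnce (h : B.QueriesIncreasing) : B.ReadOnce :=
  fun p hp => (h p hp).pairwise.nodup

def ReadOnceFrom (v : B.V) : Prop :=
  ∀ q : List B.V, (v :: q).IsChain B.Edge → ((v :: q).filterMap B.qIdx).Nodup

theorem ReadOnce.readOnceFrom_source (h : B.ReadOnce) : B.ReadOnceFrom B.source := h

variable {B}

theorem ReadOnceFrom.of_edge {u w : B.V} (hu : B.ReadOnceFrom u) (huw : B.Edge u w) :
    B.ReadOnceFrom w := fun q hq =>
  (hu (w :: q) (hq.cons_cons huw)).sublist ((List.sublist_cons_self u _).filterMap _)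

variable [Fintype D] (B)

def height (v : B.V) : ℕ :=
  match h : B.label v with
  | .inr _ => 0
  | .inl (_, c) => (Finset.univ.sup fun d => height (c d)) + 1
termination_by B.rank v
decreasing_by exact B.wf v _ c d h

variable {B}

theorem height_of_label_inr {v : B.V} {r : R} (h : B.label v = .inr r) : B.height v = 0 := by
  rw [height]; split <;> simp_all

theorem height_of_label_inl {v : B.V} {i : Fin n} {c : D → B.V} (h : B.label v = .inl (i, c)) :
    B.height v = (Finset.univ.sup fun d => B.height (c d)) + 1 := by
  rw [height]; split <;> simp_all

theorem height_lt_of_edge {u w : B.V} (h : B.Edge u w) : B.height w < B.height u := by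
  obtain ⟨i, c, d, hl, rfl⟩ := h
  rw [height_of_label_inl hl, Nat.lt_succ_iff]
  exact Finset.le_sup (f := fun d => B.height (c d)) (Finset.mem_univ d)

theorem one_le_height {v : B.V} (h : (B.qIdx v).isSome) : 1 ≤ B.height v := by
  cases hl : B.label v with
  | inr r => simp [qIdx, hl] at h
  | inl q => rw [height_of_label_inl hl]; omega

variable (B)

theorem exists_isChain_length_filterMap_qIdx_eq_height [Nonempty D] (v : B.V) :
    ∃ q : List B.V, (v :: q).IsChain B.Edge ∧
      ((v :: q).filterMap B.qIdx).length = B.height v := by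
  induction v using B.wellFounded_edge.induction with
  | _ v ih =>
    cases hl : B.label v with
    | inr r => exact ⟨[], .singleton v, by simp [qIdx, hl, height_of_label_inr hl]⟩
    | inl q =>
      obtain ⟨i, c⟩ := q
      obtain ⟨d, -, hd⟩ :=
        Finset.exists_mem_eq_sup Finset.univ Finset.univ_nonempty fun d => B.height (c d)
      have hedge : B.Edge v (c d) := ⟨i, c, d, hl, rfl⟩
      obtain ⟨q, hq, hlen⟩ := ih _ hedge
      refine ⟨c d :: q, hq.cons_cons hedge, ?_⟩
      rw [List.filterMap_cons_some (b := i) (by simp [qIdx, hl]), List.length_cons, hlen,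
        height_of_label_inl hl, hd]

variable {B}

theorem ReadOnceFrom.height_le [Nonempty D] {v : B.V} (h : B.ReadOnceFrom v) :
    B.height v ≤ n := by
  obtain ⟨q, hq, hlen⟩ := B.exists_isChain_length_filterMap_qIdx_eq_height v
  simpa [hlen] using (h q hq).length_le_card

variable (B)

-- Internal nodes have height at least `1`; the `max` only keeps the value below `n` elsewhere.
def heightIndex (v : B.V) (i : Fin n) : Fin n :=
  ⟨n - max (B.height v) 1, by have := i.pos; omega⟩

variable {B}

theorem val_of_mem_qIdx_reindex_heightIndex {v : B.V} {j : Fin n}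
    (h : j ∈ (B.reindex B.heightIndex).qIdx v) :
    (j : ℕ) = n - max (B.height v) 1 ∧ (B.qIdx v).isSome := by
  rw [qIdx_reindex, Option.mem_def, Option.map_eq_some_iff] at h
  obtain ⟨i, hi, rfl⟩ := h
  exact ⟨rfl, by simp [hi]⟩

theorem ReadOnce.queriesIncreasing_reindex_heightIndex (hro : B.ReadOnce) :
    (B.reindex B.heightIndex).QueriesIncreasing := by
  intro p hp
  rw [edge_reindex] at hp
  have hfrom : ∀ u ∈ B.source :: p, B.ReadOnceFrom u :=
    hp.induction _ _ (fun _ _ e hu => hu.of_edge e) fun _ => hro.readOnceFrom_source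
  refine (hp.imp_of_mem_imp (S := fun u w => B.ReadOnceFrom u ∧ B.Edge u w)
    fun u _ hu _ e => ⟨hfrom u hu, e⟩).filterMap ?_ ?_
  · rintro u w ⟨-, e⟩
    simpa [qIdx_reindex] using e.isSome_qIdx
  · rintro u w ⟨hu, i, c, d, hl, rfl⟩ a ha b hb
    have : Nonempty D := ⟨d⟩
    obtain ⟨ha, -⟩ := val_of_mem_qIdx_reindex_heightIndex ha
    obtain ⟨hb, hsome⟩ := val_of_mem_qIdx_reindex_heightIndex hb
    have hlt := height_lt_of_edge ⟨i, c, d, hl, rfl⟩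
    have hpos := one_le_height hsome
    have hle := hu.height_le
    rw [Fin.lt_def, ha, hb]
    omega

end BranchingProgram

open BranchingProgram in
theorem symmetric_readOnce_to_oblivious_general {n : ℕ} {D R : Type*} [Fintype D]
    (f : (Fin n → D) → R) (hsym : ∀ (x : Fin n → D) (π : Equiv.Perm (Fin n)), f (x ∘ π) = f x)
    (B : BranchingProgram n D R) (hro : B.ReadOnce)
    (hcomp : ∀ x, B.eval x B.source = f x) (σ : ℕ) (hσ : Fintype.card B.V = σ) :
    ∃ B' : BranchingProgram n D R, Fintype.card B'.V = σ ∧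
      (∀ x, B'.eval x B'.source = f x) ∧ B'.ReadOnce ∧
      ∀ p : List B'.V, List.Chain B'.Edge B'.source p →
        List.Chain' (· < ·) ((B'.source :: p).filterMap B'.qIdx) := by
  have hinc := hro.queriesIncreasing_reindex_heightIndex
  refine ⟨B.reindex B.heightIndex, hσ, fun x => ?_, hinc.readOnce, hinc⟩
  obtain ⟨π, hπ⟩ := exists_perm_eval_reindex _ hro hinc.readOnce x
  rw [hπ, hcomp, hsym]

/-- A symmetric function computed by a read-once branching program with `σ` nodes is
computed by a read-once branching program with `σ` nodes in which the queried indices are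
strictly increasing along every path from the source (in particular, oblivious read-once). -/
theorem symmetric_readOnce_to_oblivious {n : ℕ} {D R : Type*} [Fintype D] [Fintype R]
    (f : (Fin n → D) → R) (hsym : ∀ (x : Fin n → D) (π : Equiv.Perm (Fin n)), f (x ∘ π) = f x)
    (B : BranchingProgram n D R) (hro : B.ReadOnce)
    (hcomp : ∀ x, B.eval x B.source = f x) (σ : ℕ) (hσ : Fintype.card B.V = σ) :
    ∃ B' : BranchingProgram n D R, Fintype.card B'.V = σ ∧
      (∀ x, B'.eval x B'.source = f x) ∧ B'.ReadOnce ∧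
      ∀ p : List B'.V, List.Chain B'.Edge B'.source p →
        List.Chain' (· < ·) ((B'.source :: p).filterMap B'.qIdx) :=
  symmetric_readOnce_to_oblivious_general f hsym B hro hcomp σ hσ
end

section
/- There is a constant c > 0 such that for every even natural number n ≥ c, every read-once (2n)-way branching program on inputs x : Fin n → Fin (2n) whose output on every injective x equals MedianBit(x) has more than 2^(n^(1/65)) nodes. -/
open Finset Function

theorem Finset.sort_getD_card_filter_lt {α : Type*} [LinearOrder α] {s : Finset α} {y : α}
    (hy : y ∈ s) (d : α) : (s.sort (· ≤ ·)).getD #(s.filter (· < y)) d = y := by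
  set e := s.orderEmbOfFin rfl
  have mem_range_e : ∀ {z}, z ∈ s → ∃ i, e i = z := fun hz => by
    rwa [← Set.mem_range, range_orderEmbOfFin]
  obtain ⟨k, rfl⟩ := mem_range_e hy
  have hfilter : s.filter (· < e k) = (Iio k).map e.toEmbedding := by
    ext z
    simp only [mem_filter, mem_map, mem_Iio]
    constructor
    · rintro ⟨hz, hzk⟩
      obtain ⟨i, rfl⟩ := mem_range_e hz
      exact ⟨i, e.lt_iff_lt.mp hzk, rfl⟩
    · rintro ⟨i, hi, rfl⟩
      exact ⟨orderEmbOfFin_mem .., e.lt_iff_lt.mpr hi⟩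
  rw [hfilter, card_map, Fin.card_Iio, List.getD_eq_getElem _ _ (by simp)]
  rfl

theorem Function.injective_extend_of_bijOn {ι α β : Type*} {f : ι → α} {g : ι → β} {h : α → β}
    {F : Set β} (hf : Injective f) (hg : Injective g) (hh : Set.BijOn h (Set.range f)ᶜ F)
    (hdisj : Disjoint (Set.range g) F) : Injective (extend f g h) := by
  have cross : ∀ a b, b ∉ Set.range f → extend f g h (f a) ≠ extend f g h b := by
    intro a b hb hab
    rw [hf.extend_apply, extend_apply' _ _ _ hb] at hab
    exact Set.disjoint_left.mp hdisj ⟨a, rfl⟩ (hab ▸ hh.mapsTo hb)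
  intro a b hab
  by_cases ha : a ∈ Set.range f <;> by_cases hb : b ∈ Set.range f
  · obtain ⟨a, rfl⟩ := ha
    obtain ⟨b, rfl⟩ := hb
    rw [hf.extend_apply, hf.extend_apply] at hab
    rw [hg hab]
  · obtain ⟨a, rfl⟩ := ha
    exact (cross a b hb hab).elim
  · obtain ⟨b, rfl⟩ := hb
    exact (cross b a ha hab.symm).elim
  · rw [extend_apply' _ _ _ ha, extend_apply' _ _ _ hb] at hab
    exact hh.injOn ha hb hab

theorem List.compl_range_get {α : Type*} (L : List α) : (Set.range L.get)ᶜ = {i | i ∉ L} := by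
  ext i
  simp [List.mem_iff_get]

theorem List.Nodup.exists_bijOn_compl {α β : Type*} [Fintype α] [DecidableEq α] [Nonempty β]
    {L : List α} (hL : L.Nodup) {F : Finset β} (hcard : L.length + #F = Fintype.card α) :
    ∃ h : α → β, Set.BijOn h {i | i ∉ L} F := by
  apply Set.Finite.exists_bijOn_of_encard_eq (Set.toFinite _)
  have : {i | i ∉ L} = ((L.toFinset)ᶜ : Finset α) := by ext; simp
  rw [this, Set.encard_coe_eq_coe_finsetCard, Set.encard_coe_eq_coe_finsetCard, card_compl,
    List.toFinset_card_of_nodup hL]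
  norm_cast
  omega

theorem Set.bijOn_update_insert {α β : Type*} [DecidableEq α] {f : α → β} {s : Set α}
    {t : Set β} {a : α} {b : β} (hf : Set.BijOn f s t) (ha : a ∉ s) (hb : b ∉ t) :
    Set.BijOn (update f a b) (insert a s) (insert b t) := by
  have := (hf.congr fun x hx => (update_of_ne (ne_of_mem_of_not_mem hx ha) b f).symm).insert
    (a := a) (by rwa [update_self])
  rwa [update_self] at this

theorem List.Nodup.image_extend_get {α β : Type*} [Fintype α] [DecidableEq β] {L : List α}
    (hL : L.Nodup) {vals : ℕ → β} {h : α → β} {F : Finset β} (hh : Set.BijOn h {i | i ∉ L} F) :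
    univ.image (extend L.get (vals ∘ Fin.val) h) = (Finset.range L.length).image vals ∪ F := by
  apply coe_injective
  rw [coe_image, coe_univ, Set.image_univ, Set.range_extend (List.nodup_iff_injective_get.mp hL),
    Set.range_comp, Fin.range_val, L.compl_range_get, hh.image_eq, coe_union, coe_image, coe_range]

section Encoding

variable {n : ℕ} [NeZero n]

/-- The input whose `i`-th entry encodes the integer `y i ∈ {1, …, 2n}`. -/
def inputOfValues (y : Fin n → ℕ) : Fin n → Fin (2 * n) :=
  fun i => Fin.ofNat (2 * n) (y i - 1)

theorem val_inputOfValues_add_one {y : Fin n → ℕ} {i : Fin n} (hy : y i ∈ Icc 1 (2 * n)) :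
    (inputOfValues y i : ℕ) + 1 = y i := by
  rw [mem_Icc] at hy
  rw [inputOfValues, Fin.val_ofNat, Nat.mod_eq_of_lt (by omega)]
  omega

theorem medianBit_inputOfValues {y : Fin n → ℕ} (hy : ∀ i, y i ∈ Icc 1 (2 * n)) {c : ℕ}
    (hc : c ∈ univ.image y) (hcount : #((univ.image y).filter (· < c)) = n / 2 - 1) :
    medianBit n (inputOfValues y) = decide (c % 2 = 1) := by
  have : (fun i => (inputOfValues y i : ℕ) + 1) = y :=
    funext fun i => val_inputOfValues_add_one (hy i)
  rw [medianBit, this, ← hcount, sort_getD_card_filter_lt hc]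

noncomputable def completion (L : List (Fin n)) (vals : ℕ → ℕ) (h : Fin n → ℕ) :
    Fin n → Fin (2 * n) :=
  inputOfValues (extend L.get (vals ∘ Fin.val) h)

variable {L : List (Fin n)} {vals : ℕ → ℕ} {h : Fin n → ℕ} {F : Finset ℕ}

theorem completion_getElem (hL : L.Nodup) (k : Fin L.length) :
    completion L vals h L[k] = Fin.ofNat (2 * n) (vals k - 1) := by
  rw [completion, inputOfValues, show L[k] = L.get k from rfl,
    (List.nodup_iff_injective_get.mp hL).extend_apply]
  rfl

theorem completion_of_notMem {i : Fin n} (hi : i ∉ L) :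
    completion L vals h i = Fin.ofNat (2 * n) (h i - 1) := by
  rw [completion, inputOfValues, extend_apply']
  rintro ⟨k, rfl⟩
  exact hi (L.get_mem k)

theorem completion_update_of_ne (hL : L.Nodup) {i j : Fin n} (hij : i ≠ j) (c : ℕ) :
    completion L vals (update h j c) i = completion L vals h i := by
  by_cases hi : i ∈ L
  · obtain ⟨k, rfl⟩ := List.mem_iff_get.mp hi
    exact (completion_getElem hL k).trans (completion_getElem hL k).symm
  · rw [completion_of_notMem hi, completion_of_notMem hi, update_of_ne hij]

theorem map_completion (hL : L.Nodup) :
    L.map (completion L vals h) =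
      (List.range L.length).map fun k => Fin.ofNat (2 * n) (vals k - 1) :=
  List.ext_getElem (by simp) fun k hk _ => by
    simpa using completion_getElem hL ⟨k, by simpa using hk⟩

theorem injective_completion (hL : L.Nodup) (hvals : Set.InjOn vals (Set.Iio L.length))
    (hh : Set.BijOn h {i | i ∉ L} F) (hdisj : Disjoint ((range L.length).image vals) F)
    (hb : ∀ z ∈ (range L.length).image vals ∪ F, z ∈ Icc 1 (2 * n)) :
    Injective (completion L vals h) := by
  have hy := injective_extend_of_bijOn (List.nodup_iff_injective_get.mp hL)
    (g := vals ∘ Fin.val) (fun a b hab => Fin.ext (hvals a.2 b.2 hab)) (L.compl_range_get ▸ hh)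
    (by rwa [Set.range_comp, Fin.range_val, ← coe_range, ← coe_image, disjoint_coe])
  intro i i' hii'
  apply hy
  have hb' : ∀ i, extend L.get (vals ∘ Fin.val) h i ∈ Icc 1 (2 * n) := fun i =>
    hb _ (hL.image_extend_get hh ▸ mem_image_of_mem _ (mem_univ i))
  rw [← val_inputOfValues_add_one (hb' i), ← val_inputOfValues_add_one (hb' i')]
  exact congrArg (fun z : Fin (2 * n) => (z : ℕ) + 1) hii'

theorem medianBit_completion (hL : L.Nodup) (hh : Set.BijOn h {i | i ∉ L} F)
    (hb : ∀ z ∈ (range L.length).image vals ∪ F, z ∈ Icc 1 (2 * n)) {c : ℕ}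
    (hc : c ∈ (range L.length).image vals ∪ F)
    (hcount : #(((range L.length).image vals ∪ F).filter (· < c)) = n / 2 - 1) :
    medianBit n (completion L vals h) = decide (c % 2 = 1) := by
  rw [← hL.image_extend_get hh] at hb hc hcount
  exact medianBit_inputOfValues (fun i => hb _ (mem_image_of_mem _ (mem_univ i))) hc hcount

end Encoding

section HardInputs

variable (m : ℕ)

def pairValue (S : Finset ℕ) (k : ℕ) : ℕ := m + 2 * k + 1 + if k ∈ S then 1 else 0

def pairFeed [NeZero m] (S : Finset ℕ) (k : ℕ) : Fin (2 * (2 * m)) :=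
  Fin.ofNat _ (pairValue m S k - 1)

-- The member of `{m + 1, m + 2}` that is not among the first `t` read values.
def pairTwin (S : Finset ℕ) (t : ℕ) : ℕ := if 0 < t ∧ 0 ∉ S then m + 2 else m + 1

def padding (p q : ℕ) : Finset ℕ := Icc 1 p ∪ Icc (3 * m + 1) (3 * m + q)

variable {m}

theorem pairValue_strictMono (S : Finset ℕ) : StrictMono (pairValue m S) := by
  intro k k' hk
  unfold pairValue
  split_ifs <;> omega

theorem pairValue_bounds (S : Finset ℕ) (k : ℕ) :
    m + 2 * k + 1 ≤ pairValue m S k ∧ pairValue m S k ≤ m + 2 * k + 2 := by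
  unfold pairValue
  split_ifs <;> omega

theorem bounds_of_mem_image_pairValue {S : Finset ℕ} {t z : ℕ}
    (hz : z ∈ (Finset.range t).image (pairValue m S)) : m + 1 ≤ z ∧ z ≤ m + 2 * t := by
  obtain ⟨k, hk, rfl⟩ := mem_image.mp hz
  have := pairValue_bounds (m := m) S k
  rw [mem_range] at hk
  omega

theorem mem_Icc_of_mem_image_pairValue {S : Finset ℕ} {t z : ℕ} (ht : t ≤ m)
    (hz : z ∈ (Finset.range t).image (pairValue m S)) : z ∈ Icc 1 (2 * (2 * m)) := by
  have := bounds_of_mem_image_pairValue hz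
  rw [mem_Icc]
  omega

theorem pairTwin_bounds (S : Finset ℕ) (t : ℕ) :
    m + 1 ≤ pairTwin m S t ∧ pairTwin m S t ≤ m + 2 := by
  unfold pairTwin
  split_ifs <;> omega

theorem pairTwin_notMem (S : Finset ℕ) (t : ℕ) :
    pairTwin m S t ∉ (Finset.range t).image (pairValue m S) := by
  intro hmem
  obtain ⟨k, hk, hkv⟩ := mem_image.mp hmem
  rw [mem_range] at hk
  have := pairValue_bounds (m := m) S k
  rcases Nat.eq_zero_or_pos k with rfl | hk0
  · simp only [pairTwin, pairValue] at hkv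
    split_ifs at hkv <;> simp_all
  · unfold pairTwin at hkv
    split_ifs at hkv <;> omega

theorem succ_mem_insert_pairTwin (S : Finset ℕ) (t : ℕ) :
    m + 1 ∈ insert (pairTwin m S t) ((Finset.range t).image (pairValue m S)) := by
  by_cases h : 0 < t ∧ 0 ∉ S
  · exact mem_insert_of_mem (mem_image.mpr ⟨0, mem_range.mpr h.1, by simp [pairValue, h.2]⟩)
  · simp [pairTwin, h]

theorem pairValue_mod_two_ne {S S' : Finset ℕ} {r : ℕ} (hr : r ∈ symmDiff S S') :
    pairValue m S r % 2 ≠ pairValue m S' r % 2 := by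
  rcases mem_symmDiff.mp hr with ⟨h, h'⟩ | ⟨h, h'⟩ <;>
    simp only [pairValue, h, h', if_true, if_false] <;> omega

theorem mem_padding {p q z : ℕ} :
    z ∈ padding m p q ↔ 1 ≤ z ∧ z ≤ p ∨ 3 * m + 1 ≤ z ∧ z ≤ 3 * m + q := by
  simp [padding]

theorem card_padding {p q : ℕ} (hp : p ≤ 3 * m) : #(padding m p q) = p + q := by
  rw [padding, card_union_of_disjoint, Nat.card_Icc, Nat.card_Icc]
  · omega
  · exact disjoint_left.mpr fun z h h' => by simp only [mem_Icc] at h h'; omega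

theorem mem_Icc_of_mem_padding {p q z : ℕ} (hp : p ≤ m) (hq : q ≤ m) (hz : z ∈ padding m p q) :
    z ∈ Icc 1 (2 * (2 * m)) := by
  rw [mem_padding] at hz
  rw [mem_Icc]
  omega

theorem notMem_image_pairValue_of_mem_padding {S : Finset ℕ} {t p q z : ℕ} (ht : t ≤ m)
    (hp : p ≤ m) (hz : z ∈ padding m p q) : z ∉ (Finset.range t).image (pairValue m S) := by
  intro hzA
  have := bounds_of_mem_image_pairValue hzA
  rw [mem_padding] at hz
  omega

theorem filter_lt_union_padding {A : Finset ℕ} {c q : ℕ} (hA : ∀ z ∈ A, c ≤ z) (hmc : m ≤ c)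
    (hc : c ≤ 3 * m) : (A ∪ padding m (m - 1) q).filter (· < c) = Icc 1 (m - 1) := by
  ext z
  simp only [mem_filter, mem_union, mem_padding, mem_Icc]
  constructor
  · rintro ⟨hz | hz, hzc⟩
    · exact absurd (hA z hz) (by omega)
    · omega
  · omega

theorem card_filter_lt_pairValue (S : Finset ℕ) {r : ℕ} (hr : r < m) :
    #(((Finset.range m).image (pairValue m S) ∪ padding m (m - 1 - r) (r + 1)).filter
      (· < pairValue m S r)) = m - 1 := by
  have hmono := pairValue_strictMono (m := m) S
  have hr' := pairValue_bounds (m := m) S r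
  have hfilter : ((Finset.range m).image (pairValue m S) ∪ padding m (m - 1 - r) (r + 1)).filter
      (· < pairValue m S r) = (Finset.range r).image (pairValue m S) ∪ Icc 1 (m - 1 - r) := by
    ext z
    simp only [mem_filter, mem_union, mem_image, mem_range, mem_padding, mem_Icc]
    constructor
    · rintro ⟨⟨k, -, rfl⟩ | hz, hzr⟩
      · exact Or.inl ⟨k, hmono.lt_iff_lt.mp hzr, rfl⟩
      · omega
    · rintro (⟨k, hk, rfl⟩ | hz)
      · exact ⟨Or.inl ⟨k, by omega, rfl⟩, hmono hk⟩
      · omega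
  have hdisj : Disjoint ((Finset.range r).image (pairValue m S)) (Icc 1 (m - 1 - r)) :=
    disjoint_left.mpr fun z hz hz' => by
      have := bounds_of_mem_image_pairValue hz
      rw [mem_Icc] at hz'
      omega
  rw [hfilter, card_union_of_disjoint hdisj, card_image_of_injective _ hmono.injective,
    card_range, Nat.card_Icc]
  omega

end HardInputs

section HardPairs

variable {m : ℕ} [NeZero m] {S : Finset ℕ} {L : List (Fin (2 * m))} {h : Fin (2 * m) → ℕ}
  {G : Finset ℕ}

theorem injective_completion_pairValue (hL : L.Nodup) (ht : L.length ≤ m)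
    (hh : Set.BijOn h {i | i ∉ L} G)
    (hG : ∀ z ∈ G, z ∈ Icc 1 (2 * (2 * m)) ∧ z ∉ (Finset.range L.length).image (pairValue m S)) :
    Injective (completion L (pairValue m S) h) :=
  injective_completion hL (pairValue_strictMono S).injective.injOn hh
    (disjoint_right.mpr fun z hz => (hG z hz).2)
    fun z hz => (mem_union.mp hz).elim (mem_Icc_of_mem_image_pairValue ht) fun hz => (hG z hz).1

theorem medianBit_completion_pairValue (hL : L.Nodup) (ht : L.length ≤ m)
    (hh : Set.BijOn h {i | i ∉ L} G) (hG : ∀ z ∈ G, z ∈ Icc 1 (2 * (2 * m))) {c : ℕ}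
    (hc : c ∈ (Finset.range L.length).image (pairValue m S) ∪ G)
    (hcount : #(((Finset.range L.length).image (pairValue m S) ∪ G).filter (· < c)) = m - 1) :
    medianBit (2 * m) (completion L (pairValue m S) h) = decide (c % 2 = 1) :=
  medianBit_completion hL hh
    (fun z hz => (mem_union.mp hz).elim (mem_Icc_of_mem_image_pairValue ht) (hG z)) hc
    (by rw [hcount]; omega)

-- Below any such `c₀` lie exactly the `m - 1` small padding values.
theorem injective_completion_update_and_medianBit (hL : L.Nodup) (ht : L.length ≤ m)
    {j : Fin (2 * m)} (hj : j ∉ L)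
    (hh : Set.BijOn h {i | i ∉ L ++ [j]} (padding m (m - 1) (m - L.length))) {c : ℕ}
    (hmc : m ≤ c) (hc : c ≤ m + 2) (hcA : c ∉ (Finset.range L.length).image (pairValue m S)) :
    Injective (completion L (pairValue m S) (update h j c)) ∧
      ∀ c₀ ∈ insert c ((Finset.range L.length).image (pairValue m S)),
        m ≤ c₀ → c₀ ≤ m + 1 → c₀ ≤ c →
          medianBit (2 * m) (completion L (pairValue m S) (update h j c)) = decide (c₀ % 2 = 1) := by
  have hm := NeZero.pos m
  set A := (Finset.range L.length).image (pairValue m S)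
  set F := padding m (m - 1) (m - L.length)
  have hbij : Set.BijOn (update h j c) {i | i ∉ L} ↑(insert c F) := by
    have hcompl : {i | i ∉ L} = insert j {i | i ∉ L ++ [j]} := by
      ext i
      by_cases hij : i = j <;> simp [hij, hj]
    rw [hcompl, coe_insert]
    exact Set.bijOn_update_insert hh (by simp) (by simp only [F, mem_coe, mem_padding]; omega)
  have hG : ∀ z ∈ insert c F, z ∈ Icc 1 (2 * (2 * m)) ∧ z ∉ A :=
    (forall_mem_insert _ _ _).mpr ⟨⟨by rw [mem_Icc]; omega, hcA⟩, fun z hz =>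
      ⟨mem_Icc_of_mem_padding (by omega) (by omega) hz,
        notMem_image_pairValue_of_mem_padding ht (by omega) hz⟩⟩
  refine ⟨injective_completion_pairValue hL ht hbij hG, fun c₀ hc₀ hmc₀ hc₀m hc₀c =>
    medianBit_completion_pairValue hL ht hbij (fun z hz => (hG z hz).1)
      (by rw [union_insert, ← insert_union]; exact mem_union_left _ hc₀) ?_⟩
  rw [union_insert, ← insert_union, filter_lt_union_padding _ hmc₀ (by omega), Nat.card_Icc]
  · omega
  · refine (forall_mem_insert _ _ _).mpr ⟨hc₀c, fun z hz => ?_⟩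
    have := bounds_of_mem_image_pairValue hz
    omega

theorem exists_inputs_medianBit_ne_of_notMem (S : Finset ℕ) (hL : L.Nodup) (ht : L.length ≤ m)
    {j : Fin (2 * m)} (hj : j ∉ L) :
    ∃ x x' : Fin (2 * m) → Fin (2 * (2 * m)), Injective x ∧ Injective x' ∧
      L.map x = (List.range L.length).map (pairFeed m S) ∧
      L.map x' = (List.range L.length).map (pairFeed m S) ∧
      (∀ i, i ≠ j → x i = x' i) ∧ medianBit (2 * m) x ≠ medianBit (2 * m) x' := by
  have hm := NeZero.pos m
  have hLj : (L ++ [j]).Nodup := hL.append (List.nodup_singleton j) (by simpa using hj)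
  obtain ⟨h, hh⟩ := hLj.exists_bijOn_compl (F := padding m (m - 1) (m - L.length)) (by
    rw [card_padding (by omega)]
    simp only [List.length_append, List.length_singleton, Fintype.card_fin]
    omega)
  have hu := pairTwin_bounds (m := m) S L.length
  obtain ⟨hx, hmx⟩ := injective_completion_update_and_medianBit hL ht hj hh le_rfl (by omega)
    fun hmA => by
      have := bounds_of_mem_image_pairValue hmA
      omega
  obtain ⟨hx', hmx'⟩ := injective_completion_update_and_medianBit hL ht hj hh (by omega) hu.2
    (pairTwin_notMem S _)
  refine ⟨_, _, hx, hx', map_completion hL, map_completion hL,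
    fun i hij => (completion_update_of_ne hL hij _).trans (completion_update_of_ne hL hij _).symm,
    ?_⟩
  rw [hmx m (mem_insert_self _ _) le_rfl (by omega) le_rfl,
    hmx' (m + 1) (succ_mem_insert_pairTwin S _) (by omega) le_rfl hu.1]
  simp only [ne_eq, decide_eq_decide]
  omega

-- Below `pairValue m T r` lie exactly the `r` earlier read values and the `m - 1 - r` small
-- padding values.
theorem injective_completion_and_medianBit_of_padding {T : Finset ℕ} {K : List (Fin (2 * m))}
    (hK : K.Nodup) (hKlen : K.length = m) {r : ℕ} (hrm : r < m)
    (hh : Set.BijOn h {i | i ∉ K} (padding m (m - 1 - r) (r + 1))) :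
    Injective (completion K (pairValue m T) h) ∧
      medianBit (2 * m) (completion K (pairValue m T) h) = decide (pairValue m T r % 2 = 1) :=
  ⟨injective_completion_pairValue hK hKlen.le hh fun z hz =>
      ⟨mem_Icc_of_mem_padding (by omega) (by omega) hz,
        notMem_image_pairValue_of_mem_padding hKlen.le (by omega) hz⟩,
    medianBit_completion_pairValue hK hKlen.le hh
      (fun z hz => mem_Icc_of_mem_padding (by omega) (by omega) hz)
      (mem_union_left _ (mem_image_of_mem _ (mem_range.mpr (by omega))))
      (by rw [hKlen, card_filter_lt_pairValue T hrm])⟩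

theorem exists_inputs_medianBit_ne_of_mem_symmDiff {S S' : Finset ℕ} {r : ℕ}
    (hr : r ∈ symmDiff S S') (hrm : r < m) {L L' : List (Fin (2 * m))} (hL : L.Nodup)
    (hL' : L'.Nodup) (hlen : L.length = m) (hlen' : L'.length = m) (hmem : ∀ i, i ∈ L ↔ i ∈ L') :
    ∃ x x' : Fin (2 * m) → Fin (2 * (2 * m)), Injective x ∧ Injective x' ∧
      L.map x = (List.range m).map (pairFeed m S) ∧
      L'.map x' = (List.range m).map (pairFeed m S') ∧
      (∀ i, i ∉ L → x i = x' i) ∧ medianBit (2 * m) x ≠ medianBit (2 * m) x' := by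
  obtain ⟨h, hh⟩ := hL.exists_bijOn_compl (F := padding m (m - 1 - r) (r + 1)) (by
    rw [card_padding (by omega), hlen, Fintype.card_fin]
    omega)
  have hh' : Set.BijOn h {i | i ∉ L'} (padding m (m - 1 - r) (r + 1)) := by
    simpa only [hmem] using hh
  obtain ⟨hx, hmx⟩ := injective_completion_and_medianBit_of_padding (T := S) hL hlen hrm hh
  obtain ⟨hx', hmx'⟩ := injective_completion_and_medianBit_of_padding (T := S') hL' hlen' hrm hh'
  refine ⟨_, _, hx, hx', by rw [map_completion hL, hlen]; rfl,
    by rw [map_completion hL', hlen']; rfl, fun i hi => ?_, ?_⟩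
  · rw [completion_of_notMem hi, completion_of_notMem ((hmem i).not.mp hi)]
  · rw [hmx, hmx']
    have := pairValue_mod_two_ne (m := m) hr
    simp only [ne_eq, decide_eq_decide]
    omega

end HardPairs

namespace BranchingProgram

variable {n : ℕ} {D R : Type*} {B : BranchingProgram n D R}

theorem eval_of_label_eq_inl {x : Fin n → D} {v : B.V} {i : Fin n} {f : D → B.V}
    (hv : B.label v = .inl (i, f)) : B.eval x v = B.eval x (f (x i)) := by
  rw [eval]
  split <;> simp_all

theorem eval_of_label_eq_inr {x : Fin n → D} {v : B.V} {r : R} (hv : B.label v = .inr r) :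
    B.eval x v = r := by
  rw [eval]
  split <;> simp_all

variable (B) in
inductive Reaches : B.V → List (Fin n) → List D → Prop
  | source : Reaches B.source [] []
  | step {u : B.V} {L : List (Fin n)} {ds : List D} {i : Fin n} {f : D → B.V} (d : D) :
      Reaches u L ds → B.label u = .inl (i, f) → Reaches (f d) (L ++ [i]) (ds ++ [d])

namespace Reaches

variable {v : B.V} {L : List (Fin n)} {ds : List D}

theorem length_eq (h : B.Reaches v L ds) : L.length = ds.length := by
  induction h with
  | source => rfl
  | step _ _ _ ih => simp [ih]

theorem exists_isChain (h : B.Reaches v L ds) :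
    ∃ p, (B.source :: p).IsChain B.Edge ∧ (B.source :: p).getLast? = some v ∧
      (B.source :: p).filterMap B.qIdx = L ++ (B.qIdx v).toList := by
  induction h with
  | source => exact ⟨[], .singleton _, rfl, by cases h : B.qIdx B.source <;> simp [h]⟩
  | @step u L ds i f d _ hu ih =>
    obtain ⟨p, hchain, hlast, hfilter⟩ := ih
    have hq : B.qIdx u = some i := by simp [qIdx, hu]
    refine ⟨p ++ [f d], ?_, by simp [List.getLast?_cons], ?_⟩
    · rw [← List.cons_append, List.isChain_append]
      exact ⟨hchain, .singleton _, fun a ha b hb => by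
        simp only [hlast, Option.mem_def, Option.some.injEq] at ha
        simp only [List.head?_cons, Option.mem_def, Option.some.injEq] at hb
        exact ha ▸ hb ▸ ⟨i, f, d, hu, rfl⟩⟩
    · rw [← List.cons_append, List.filterMap_append, hfilter, hq]
      cases h : B.qIdx (f d) <;> simp [h]

theorem nodup (hRO : B.ReadOnce) (h : B.Reaches v L ds) : (L ++ (B.qIdx v).toList).Nodup := by
  obtain ⟨p, hchain, -, hfilter⟩ := h.exists_isChain
  exact hfilter ▸ hRO p hchain

theorem eval_source {x : Fin n → D} (h : B.Reaches v L ds) (hx : L.map x = ds) :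
    B.eval x B.source = B.eval x v := by
  induction h with
  | source => rfl
  | step d _ hu ih =>
    rw [List.map_append, List.map_singleton] at hx
    obtain ⟨hx, hd⟩ := List.append_inj' hx rfl
    rw [ih hx, eval_of_label_eq_inl hu, List.singleton_inj.mp hd]

/-- By read-once, no position in `L` is queried again after `v`. -/
theorem eval_congr (hRO : B.ReadOnce) {x y : Fin n → D} (h : B.Reaches v L ds)
    (hxy : ∀ i, i ∉ L → x i = y i) : B.eval x v = B.eval y v := by
  induction hrank : B.rank v using Nat.strong_induction_on generalizing v L ds with
  | _ N ih =>
    rcases hv : B.label v with ⟨i, f⟩ | r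
    · have hi : i ∉ L := by
        have := h.nodup hRO
        simp only [qIdx, hv, Sum.elim_inl, Option.toList_some] at this
        exact fun hiL => (List.nodup_append.mp this).2.2 i hiL i (List.mem_singleton_self i) rfl
      rw [eval_of_label_eq_inl hv, eval_of_label_eq_inl hv, ← hxy i hi]
      refine ih _ (hrank ▸ B.wf v i f (x i) hv) (h.step (x i) hv) (fun k hk => hxy k ?_) rfl
      exact fun hkL => hk (List.mem_append_left _ hkL)
    · rw [eval_of_label_eq_inr hv, eval_of_label_eq_inr hv]

end Reaches

end BranchingProgram

section LowerBound

open BranchingProgram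

variable {m : ℕ} [NeZero m] {B : BranchingProgram (2 * m) (Fin (2 * (2 * m))) Bool}

theorem exists_label_eq_inl_of_reaches_pairFeed (hRO : B.ReadOnce)
    (hB : ∀ x, Injective x → B.eval x B.source = medianBit (2 * m) x) {S : Finset ℕ} {t : ℕ}
    (ht : t < m) {v : B.V} {L : List (Fin (2 * m))}
    (h : B.Reaches v L ((List.range t).map (pairFeed m S))) : ∃ i f, B.label v = .inl (i, f) := by
  rcases hv : B.label v with ⟨i, f⟩ | b
  · exact ⟨i, f, rfl⟩
  exfalso
  have hlen : L.length = t := by simpa using h.length_eq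
  have hL : L.Nodup := (h.nodup hRO).of_append_left
  obtain ⟨j, hj⟩ : (L.toFinset)ᶜ.Nonempty := by
    rw [← card_pos, card_compl, Fintype.card_fin]
    have := L.toFinset_card_le
    omega
  obtain ⟨x, x', hx, hx', hLx, hLx', -, hne⟩ :=
    exists_inputs_medianBit_ne_of_notMem S hL (by omega) (by simpa using hj)
  rw [hlen] at hLx hLx'
  rw [← hB x hx, ← hB x' hx', h.eval_source hLx, h.eval_source hLx', eval_of_label_eq_inr hv,
    eval_of_label_eq_inr hv] at hne
  exact hne rfl

theorem exists_reaches_pairFeed (hRO : B.ReadOnce)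
    (hB : ∀ x, Injective x → B.eval x B.source = medianBit (2 * m) x) (S : Finset ℕ) :
    ∀ t ≤ m, ∃ v L, B.Reaches v L ((List.range t).map (pairFeed m S))
  | 0, _ => ⟨B.source, [], .source⟩
  | t + 1, ht => by
    obtain ⟨v, L, h⟩ := exists_reaches_pairFeed hRO hB S t (by omega)
    obtain ⟨i, f, hv⟩ := exists_label_eq_inl_of_reaches_pairFeed hRO hB (by omega) h
    refine ⟨f (pairFeed m S t), L ++ [i], ?_⟩
    rw [List.range_succ, List.map_append, List.map_singleton]
    exact h.step _ hv

theorem eq_of_reaches_pairFeed (hRO : B.ReadOnce)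
    (hB : ∀ x, Injective x → B.eval x B.source = medianBit (2 * m) x) {S S' : Finset ℕ}
    (hS : S ⊆ range m) (hS' : S' ⊆ range m) {v : B.V} {L L' : List (Fin (2 * m))}
    (h : B.Reaches v L ((List.range m).map (pairFeed m S)))
    (h' : B.Reaches v L' ((List.range m).map (pairFeed m S'))) : S = S' := by
  by_contra hSS'
  obtain ⟨r, hr⟩ := symmDiff_nonempty.mpr hSS'
  have hrm : r < m := by
    rcases mem_symmDiff.mp hr with ⟨hr, -⟩ | ⟨hr, -⟩
    exacts [mem_range.mp (hS hr), mem_range.mp (hS' hr)]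
  have hlen : L.length = m := by simpa using h.length_eq
  have hlen' : L'.length = m := by simpa using h'.length_eq
  have hL : L.Nodup := (h.nodup hRO).of_append_left
  have hL' : L'.Nodup := (h'.nodup hRO).of_append_left
  by_cases hsub : L' ⊆ L
  · have hmem : ∀ i, i ∈ L ↔ i ∈ L' := fun i =>
      ((hL'.subperm hsub).perm_of_length_le (by omega)).mem_iff.symm
    obtain ⟨x, x', hx, hx', hLx, hLx', hxx', hne⟩ :=
      exists_inputs_medianBit_ne_of_mem_symmDiff hr hrm hL hL' hlen hlen' hmem
    rw [← hB x hx, ← hB x' hx', h.eval_source hLx, h'.eval_source hLx'] at hne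
    exact hne (h.eval_congr hRO hxx')
  · obtain ⟨j, hjL', hjL⟩ : ∃ j ∈ L', j ∉ L := by simpa [List.subset_def] using hsub
    obtain ⟨x, x', hx, hx', hLx, hLx', hxx', hne⟩ :=
      exists_inputs_medianBit_ne_of_notMem S hL (by omega) hjL
    rw [hlen] at hLx hLx'
    rw [← hB x hx, ← hB x' hx', h.eval_source hLx, h.eval_source hLx'] at hne
    exact hne (h'.eval_congr hRO fun i hi => hxx' i fun hij => hi (hij ▸ hjL'))

theorem two_pow_le_card_of_readOnce (hRO : B.ReadOnce)
    (hB : ∀ x, Injective x → B.eval x B.source = medianBit (2 * m) x) :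
    2 ^ m ≤ Fintype.card B.V := by
  choose v L hv using fun S => exists_reaches_pairFeed hRO hB S m le_rfl
  calc 2 ^ m = #(range m).powerset := by simp
    _ ≤ #(univ : Finset B.V) := card_le_card_of_injOn v (fun _ _ => mem_coe.mpr (mem_univ _))
        fun S hS S' hS' hSS' => eq_of_reaches_pairFeed hRO hB (mem_powerset.mp hS)
          (mem_powerset.mp hS') (hv S) (hSS' ▸ hv S')
    _ = Fintype.card B.V := card_univ

end LowerBound

theorem rpow_one_div_sixtyFive_lt_half {x : ℝ} (hx : 4 < x) : x ^ ((1 : ℝ) / 65) < x / 2 := by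
  calc x ^ ((1 : ℝ) / 65) ≤ x ^ ((1 : ℝ) / 2) :=
        Real.rpow_le_rpow_of_exponent_le (by linarith) (by norm_num)
    _ = √x := (Real.sqrt_eq_rpow x).symm
    _ < x / 2 := by
      rw [Real.sqrt_lt' (by linarith)]
      nlinarith

/-- Any read-once `(2n)`-way branching program whose output on every injective input equals
`MedianBit` has more than `2^(n^(1/65))` nodes, for all sufficiently large even `n`. -/
theorem readOnce_median_size_lb :
    ∃ c : ℕ, 0 < c ∧
      ∀ n : ℕ, Even n → c ≤ n →
        ∀ B : BranchingProgram n (Fin (2 * n)) Bool, B.ReadOnce →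
          (∀ x : Fin n → Fin (2 * n), Function.Injective x →
            B.eval x B.source = medianBit n x) →
          (2 : ℝ) ^ ((n : ℝ) ^ ((1 : ℝ) / 65)) < (Fintype.card B.V : ℝ) := by
  refine ⟨6, by norm_num, ?_⟩
  rintro n hn hn6 B hRO hB
  obtain ⟨m, rfl⟩ := hn.two_dvd
  have : NeZero m := ⟨by omega⟩
  calc (2 : ℝ) ^ (((2 * m : ℕ) : ℝ) ^ ((1 : ℝ) / 65)) < 2 ^ (((2 * m : ℕ) : ℝ) / 2) :=
        Real.rpow_lt_rpow_of_exponent_lt one_lt_two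
          (rpow_one_div_sixtyFive_lt_half (by exact_mod_cast (by omega : 4 < 2 * m)))
    _ = ((2 ^ m : ℕ) : ℝ) := by
        rw [Nat.cast_mul, Nat.cast_ofNat, mul_div_cancel_left₀ _ two_ne_zero, Real.rpow_natCast]
        push_cast
        rfl
    _ ≤ Fintype.card B.V := by exact_mod_cast two_pow_le_card_of_readOnce hRO hB
end
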